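/- Let K(𝓜) be a Kripke model with classical domains (arising from a sound assignment of transitive models of ZF to the nodes of a Kripke frame). Then K(𝓜) forces every axiom of intuitionistic Kripke–Platek set theory IKP⁺, i.e., K(𝓜) ⊩ IKP⁺. -/
import Mathlib


namespace IKP2007

/-! ## Syntax: formulas of the language `{∈, =}` of set theory (de Bruijn indices) -/

inductive SetF : Type where
  | mem : ℕ → ℕ → SetF
  | eq  : ℕ → ℕ → SetF
  | bot : SetF
  | and : SetF → SetF → SetF
  | or  : SetF → SetF → SetF
  | imp : SetF → SetF → SetF
  | ex  : SetF → SetF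
  | all : SetF → SetF

namespace SetF

/-- Negation. -/
def neg (φ : SetF) : SetF := .imp φ .bot

/-- Bi-implication. -/
def biimp (φ ψ : SetF) : SetF := .and (.imp φ ψ) (.imp ψ φ)

/-- Lift a variable renaming under one binder. -/
def liftR (f : ℕ → ℕ) : ℕ → ℕ
  | 0 => 0
  | n + 1 => f n + 1

/-- Apply a renaming to the free variables of a formula. -/
def rename (f : ℕ → ℕ) : SetF → SetF
  | mem i j => mem (f i) (f j)
  | eq i j  => eq (f i) (f j)
  | bot => bot
  | and φ ψ => and (rename f φ) (rename f ψ)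
  | or φ ψ  => or (rename f φ) (rename f ψ)
  | imp φ ψ => imp (rename f φ) (rename f ψ)
  | ex φ  => ex (rename (liftR f) φ)
  | all φ => all (rename (liftR f) φ)

/-- Shift all free variables up by one. -/
def shift (φ : SetF) : SetF := rename Nat.succ φ

/-- Instantiate the outermost bound variable (index 0) by the free variable `k`;
to be applied to the body of a quantifier. -/
def instVar (k : ℕ) (φ : SetF) : SetF :=
  rename (fun n => match n with | 0 => k | m + 1 => m) φ

/-- All free variables are `< n`. -/
def ClosedUnder : ℕ → SetF → Prop
  | n, mem i j => i < n ∧ j < n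
  | n, eq i j  => i < n ∧ j < n
  | _, bot => True
  | n, and φ ψ => ClosedUnder n φ ∧ ClosedUnder n ψ
  | n, or φ ψ  => ClosedUnder n φ ∧ ClosedUnder n ψ
  | n, imp φ ψ => ClosedUnder n φ ∧ ClosedUnder n ψ
  | n, ex φ  => ClosedUnder (n + 1) φ
  | n, all φ => ClosedUnder (n + 1) φ

/-- A sentence is a formula without free variables. -/
def Sentence (φ : SetF) : Prop := ClosedUnder 0 φ

/-- The variable `n` occurs freely in the formula. -/
def FreeIn : ℕ → SetF → Prop
  | n, mem i j => i = n ∨ j = n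
  | n, eq i j  => i = n ∨ j = n
  | _, bot => False
  | n, and φ ψ => FreeIn n φ ∨ FreeIn n ψ
  | n, or φ ψ  => FreeIn n φ ∨ FreeIn n ψ
  | n, imp φ ψ => FreeIn n φ ∨ FreeIn n ψ
  | n, ex φ  => FreeIn (n + 1) φ
  | n, all φ => FreeIn (n + 1) φ

end SetF

/-! ## The Δ₀-formulas and the Σ/Π-hierarchy -/

/-- Δ₀-formulas: all quantifiers are bounded. -/
inductive Delta0 : SetF → Prop where
  | mem (i j : ℕ) : Delta0 (SetF.mem i j)
  | eq (i j : ℕ) : Delta0 (SetF.eq i j)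
  | bot : Delta0 SetF.bot
  | and {φ ψ} : Delta0 φ → Delta0 ψ → Delta0 (SetF.and φ ψ)
  | or {φ ψ} : Delta0 φ → Delta0 ψ → Delta0 (SetF.or φ ψ)
  | imp {φ ψ} : Delta0 φ → Delta0 ψ → Delta0 (SetF.imp φ ψ)
  | ball {φ} (k : ℕ) : Delta0 φ → Delta0 (SetF.all (SetF.imp (SetF.mem 0 (k + 1)) φ))
  | bex {φ} (k : ℕ) : Delta0 φ → Delta0 (SetF.ex (SetF.and (SetF.mem 0 (k + 1)) φ))

mutual
  /-- The Σₙ-formulas of the Lévy hierarchy. -/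
  inductive SigmaN : ℕ → SetF → Prop where
    | delta0 {n φ} : Delta0 φ → SigmaN n φ
    | ofPi {n φ} : PiN n φ → SigmaN (n + 1) φ
    | ex {n φ} : SigmaN (n + 1) φ → SigmaN (n + 1) (SetF.ex φ)
  /-- The Πₙ-formulas of the Lévy hierarchy. -/
  inductive PiN : ℕ → SetF → Prop where
    | delta0 {n φ} : Delta0 φ → PiN n φ
    | ofSigma {n φ} : SigmaN n φ → PiN (n + 1) φ
    | all {n φ} : PiN (n + 1) φ → PiN (n + 1) (SetF.all φ)
end

/-- Σ₃-formulas. -/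
def Sigma3 (φ : SetF) : Prop := SigmaN 3 φ

/-! ## Intuitionistic first-order provability (with equality) for the language `{∈,=}` -/

/-- Natural deduction for intuitionistic first-order logic with equality over the
language of set theory.  `Prf Γ φ` means that `φ` is derivable from the set of
hypotheses `Γ`. -/
inductive Prf : Set SetF → SetF → Prop where
  | hyp {Γ φ} : φ ∈ Γ → Prf Γ φ
  | botE {Γ φ} : Prf Γ .bot → Prf Γ φ
  | andI {Γ φ ψ} : Prf Γ φ → Prf Γ ψ → Prf Γ (.and φ ψ)
  | andE₁ {Γ φ ψ} : Prf Γ (.and φ ψ) → Prf Γ φ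
  | andE₂ {Γ φ ψ} : Prf Γ (.and φ ψ) → Prf Γ ψ
  | orI₁ {Γ φ ψ} : Prf Γ φ → Prf Γ (.or φ ψ)
  | orI₂ {Γ φ ψ} : Prf Γ ψ → Prf Γ (.or φ ψ)
  | orE {Γ φ ψ χ} : Prf Γ (.or φ ψ) → Prf (insert φ Γ) χ → Prf (insert ψ Γ) χ → Prf Γ χ
  | impI {Γ φ ψ} : Prf (insert φ Γ) ψ → Prf Γ (.imp φ ψ)
  | impE {Γ φ ψ} : Prf Γ (.imp φ ψ) → Prf Γ φ → Prf Γ ψ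
  | allI {Γ φ} : Prf (SetF.shift '' Γ) φ → Prf Γ (.all φ)
  | allE {Γ φ} (k : ℕ) : Prf Γ (.all φ) → Prf Γ (φ.instVar k)
  | exI {Γ φ} (k : ℕ) : Prf Γ (φ.instVar k) → Prf Γ (.ex φ)
  | exE {Γ φ ψ} : Prf Γ (.ex φ) → Prf (insert φ (SetF.shift '' Γ)) ψ.shift → Prf Γ ψ
  | eqRefl {Γ} (i : ℕ) : Prf Γ (.eq i i)
  | eqSym {Γ i j} : Prf Γ (.eq i j) → Prf Γ (.eq j i)
  | eqTrans {Γ i j k} : Prf Γ (.eq i j) → Prf Γ (.eq j k) → Prf Γ (.eq i k)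
  | eqMemL {Γ i j k} : Prf Γ (.eq i j) → Prf Γ (.mem i k) → Prf Γ (.mem j k)
  | eqMemR {Γ i j k} : Prf Γ (.eq i j) → Prf Γ (.mem k i) → Prf Γ (.mem k j)

/-! ## The axioms of the set theories -/

namespace Axioms

/-- Extensionality: `∀a∀b(∀x(x∈a ↔ x∈b) → a=b)`. -/
def extensionality : SetF :=
  .all (.all (.imp (.all (SetF.biimp (.mem 0 2) (.mem 0 1))) (.eq 1 0)))

/-- Empty set: `∃a ∀x∈a ⊥`. -/
def emptySet : SetF := .ex (.all (.imp (.mem 0 1) .bot))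

/-- Pairing: `∀a∀b∃y∀x(x∈y ↔ (x=a ∨ x=b))`. -/
def pairing : SetF :=
  .all (.all (.ex (.all (SetF.biimp (.mem 0 1) (.or (.eq 0 3) (.eq 0 2))))))

/-- Union: `∀a∃y∀x(x∈y ↔ ∃u(u∈a ∧ x∈u))`. -/
def unionAx : SetF :=
  .all (.ex (.all (SetF.biimp (.mem 0 1) (.ex (.and (.mem 0 3) (.mem 1 0))))))

/-- Power set: `∀a∃y∀x(x∈y ↔ x ⊆ a)`. -/
def powerSet : SetF :=
  .all (.ex (.all (SetF.biimp (.mem 0 1) (.all (.imp (.mem 0 1) (.mem 0 3))))))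

/-- `x_i` is empty. -/
def isEmptyV (i : ℕ) : SetF := .all (.imp (.mem 0 (i + 1)) .bot)

/-- `x_i = x_j ∪ {x_j}` (a Δ₀-property). -/
def isSuccV (i j : ℕ) : SetF :=
  .and (.all (.imp (.mem 0 (i + 1)) (.or (.mem 0 (j + 1)) (.eq 0 (j + 1)))))
  (.and (.all (.imp (.mem 0 (j + 1)) (.mem 0 (i + 1)))) (.mem j i))

/-- `x_i = {∅}` (a Δ₀-property). -/
def isSingEmptyV (i : ℕ) : SetF :=
  .and (.all (.imp (.mem 0 (i + 1)) (isEmptyV 0)))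
       (.ex (.and (.mem 0 (i + 1)) (isEmptyV 0)))

/-- `x_i = 2 = {∅, {∅}}` (a Δ₀-property). -/
def isTwoV (i : ℕ) : SetF :=
  .and (.all (.imp (.mem 0 (i + 1)) (.or (isEmptyV 0) (isSingEmptyV 0))))
  (.and (.ex (.and (.mem 0 (i + 1)) (isEmptyV 0)))
        (.ex (.and (.mem 0 (i + 1)) (isSingEmptyV 0))))

/-- Infinity, as in `IKP`:
`∃x(∅∈x ∧ (∀y∈x  y∪{y}∈x) ∧ (∀y∈x (y=∅ ∨ ∃z∈y y=z∪{z})))`. -/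
def infinityIKP : SetF :=
  .ex (.and (.ex (.and (.mem 0 1) (isEmptyV 0)))
    (.and (.all (.imp (.mem 0 1) (.ex (.and (.mem 0 2) (isSuccV 0 1)))))
          (.all (.imp (.mem 0 1) (.or (isEmptyV 0) (.ex (.and (.mem 0 1) (isSuccV 1 0))))))))

/-- `x_i` is an inductive set: `∅ ∈ x_i ∧ ∀y∈x_i (y∪{y} ∈ x_i)`. -/
def indV (i : ℕ) : SetF :=
  .and (.ex (.and (.mem 0 (i + 1)) (isEmptyV 0)))
       (.all (.imp (.mem 0 (i + 1)) (.ex (.and (.mem 0 (i + 2)) (isSuccV 0 1)))))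

/-- Strong infinity: `∃a(Ind(a) ∧ ∀b(Ind(b) → ∀x∈a (x∈b)))`. -/
def strongInfinity : SetF :=
  .ex (.and (indV 0) (.all (.imp (indV 0) (.all (.imp (.mem 0 2) (.mem 0 1))))))

/-- Infinity, classical version: `∃x(∅∈x ∧ ∀y∈x (y∪{y}∈x))`. -/
def zfInfinity : SetF :=
  .ex (.and (.ex (.and (.mem 0 1) (isEmptyV 0)))
            (.all (.imp (.mem 0 1) (.ex (.and (.mem 0 2) (isSuccV 0 1))))))

/-- Set induction for `φ` (free variable `0` of `φ` is the induction variable):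
`(∀a(∀x∈a φ(x) → φ(a))) → ∀a φ(a)`. -/
def setInd (φ : SetF) : SetF :=
  .imp (.all (.imp (.all (.imp (.mem 0 1) (φ.rename (SetF.liftR Nat.succ)))) φ)) (.all φ)

/-- Separation for `φ` (free variable `0` of `φ` is the separation variable):
`∀a∃y∀x(x∈y ↔ x∈a ∧ φ(x))`. -/
def sep (φ : SetF) : SetF :=
  .all (.ex (.all (SetF.biimp (.mem 0 1)
    (.and (.mem 0 2) (φ.rename (SetF.liftR (· + 2)))))))

/-- Renaming placing `x, y` (variables `0, 1` of `φ`) in the context `[y, x, a, …]`. -/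
def collMap₁ : ℕ → ℕ | 0 => 1 | 1 => 0 | n + 2 => n + 3
/-- Renaming placing `x, y` in the context `[y, x, b, a, …]`. -/
def collMap₂ : ℕ → ℕ | 0 => 1 | 1 => 0 | n + 2 => n + 4
/-- Renaming placing `x, y` in the context `[x, y, b, a, …]`. -/
def collMap₃ : ℕ → ℕ | 0 => 0 | 1 => 1 | n + 2 => n + 4

/-- Collection for `φ(x,y)` (variables `0,1`):
`∀a(∀x∈a ∃y φ(x,y) → ∃b ∀x∈a ∃y∈b φ(x,y))`. -/
def coll (φ : SetF) : SetF :=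
  .all (.imp (.all (.imp (.mem 0 1) (.ex (φ.rename collMap₁))))
       (.ex (.all (.imp (.mem 0 2) (.ex (.and (.mem 0 2) (φ.rename collMap₂)))))))

/-- Strong collection for `φ(x,y)` (variables `0,1`):
`∀a(∀x∈a∃y φ → ∃b(∀x∈a∃y∈b φ ∧ ∀y∈b∃x∈a φ))`. -/
def strongColl (φ : SetF) : SetF :=
  .all (.imp (.all (.imp (.mem 0 1) (.ex (φ.rename collMap₁))))
       (.ex (.and (.all (.imp (.mem 0 2) (.ex (.and (.mem 0 2) (φ.rename collMap₂)))))
                  (.all (.imp (.mem 0 1) (.ex (.and (.mem 0 3) (φ.rename collMap₃))))))))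

/-- Renaming placing `x, y, u` (variables `0,1,2` of `ψ`) in the context `[y,x,u,c,b,a,…]`. -/
def sscMap₁ : ℕ → ℕ | 0 => 1 | 1 => 0 | 2 => 2 | n + 3 => n + 6
/-- Renaming placing `x, y, u` in the context `[y,x,d,u,c,b,a,…]`. -/
def sscMap₂ : ℕ → ℕ | 0 => 1 | 1 => 0 | 2 => 3 | n + 3 => n + 7
/-- Renaming placing `x, y, u` in the context `[x,y,d,u,c,b,a,…]`. -/
def sscMap₃ : ℕ → ℕ | 0 => 0 | 1 => 1 | 2 => 3 | n + 3 => n + 7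

/-- Subset collection for `ψ(x,y,u)` (variables `0,1,2`):
`∀a∀b∃c∀u(∀x∈a∃y∈b ψ → ∃d∈c(∀x∈a∃y∈d ψ ∧ ∀y∈d∃x∈a ψ))`. -/
def subsetColl (ψ : SetF) : SetF :=
  .all (.all (.ex (.all (.imp
    (.all (.imp (.mem 0 4) (.ex (.and (.mem 0 4) (ψ.rename sscMap₁)))))
    (.ex (.and (.mem 0 2)
      (.and (.all (.imp (.mem 0 5) (.ex (.and (.mem 0 2) (ψ.rename sscMap₂)))))
            (.all (.imp (.mem 0 1) (.ex (.and (.mem 0 6) (ψ.rename sscMap₃))))))))))))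

/-- `x_i = {x_j}` (a Δ₀-property). -/
def isSingV (i j : ℕ) : SetF :=
  .and (.all (.imp (.mem 0 (i + 1)) (.eq 0 (j + 1)))) (.mem j i)

/-- `x_i = {x_j, x_k}` (a Δ₀-property). -/
def isUPairV (i j k : ℕ) : SetF :=
  .and (.all (.imp (.mem 0 (i + 1)) (.or (.eq 0 (j + 1)) (.eq 0 (k + 1)))))
  (.and (.mem j i) (.mem k i))

/-- `x_p = ⟨x_a, x_b⟩` (Kuratowski pair). -/
def isOPairV (p a b : ℕ) : SetF :=
  .and (.all (.imp (.mem 0 (p + 1)) (.or (isSingV 0 (a + 1)) (isUPairV 0 (a + 1) (b + 1)))))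
  (.and (.ex (.and (.mem 0 (p + 1)) (isSingV 0 (a + 1))))
        (.ex (.and (.mem 0 (p + 1)) (isUPairV 0 (a + 1) (b + 1)))))

/-- `⟨x_n, x_m⟩ ∈ x_f`, i.e. `x_f(x_n) = x_m` for a function `x_f`. -/
def appV (f n m : ℕ) : SetF := .ex (.and (.mem 0 (f + 1)) (isOPairV 0 (n + 1) (m + 1)))

/-- `x_f : x_a → x_b` : `x_f` is a function from `x_a` to `x_b` (a Δ₀-property). -/
def isFunFromTo (f a b : ℕ) : SetF :=
  .and (.all (.imp (.mem 0 (f + 1))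
          (.ex (.and (.mem 0 (a + 2)) (.ex (.and (.mem 0 (b + 3)) (isOPairV 2 1 0)))))))
  (.and (.all (.imp (.mem 0 (a + 1))
          (.ex (.and (.mem 0 (b + 2)) (.ex (.and (.mem 0 (f + 3)) (isOPairV 0 2 1)))))))
        (.all (.imp (.mem 0 (a + 1)) (.all (.imp (.mem 0 (b + 2)) (.all (.imp (.mem 0 (b + 3))
          (.imp (.and (appV (f + 3) 2 1) (appV (f + 3) 2 0)) (.eq 1 0)))))))))

/-- The exponentiation axiom `Exp`: `∀x∀y∃z∀f(f ∈ z ↔ f : x → y)`. -/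
def expAx : SetF := .all (.all (.ex (.all (SetF.biimp (.mem 0 1) (isFunFromTo 0 3 2)))))

/-- `x_i = ω`: `x_i` is the least inductive set. -/
def isOmegaV (i : ℕ) : SetF :=
  .and (indV i) (.all (.imp (indV 0) (.all (.imp (.mem 0 (i + 2)) (.mem 0 1)))))

/-- Markov's principle:
`∀α : ℕ → 2 (¬∀n∈ℕ α(n)=0 → ∃n∈ℕ α(n)=1)`. -/
def markov : SetF :=
  .all (.imp (isOmegaV 0) (.all (.imp (isTwoV 0) (.all (.imp (isFunFromTo 0 2 1)
    (.imp (SetF.neg (.all (.imp (.mem 0 3) (.ex (.and (isEmptyV 0) (appV 2 1 0))))))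
          (.ex (.and (.mem 0 3) (.ex (.and (isSingEmptyV 0) (appV 2 1 0)))))))))))

/-- The axiom of choice:
`∀a((∀x∈a∀y∈a(x≠y → x∩y=∅)) → ∃b∀x∈a∃!z∈b z∈x)`. -/
def choiceAx : SetF :=
  .all (.imp
    (.all (.imp (.mem 0 1) (.all (.imp (.mem 0 2)
        (.imp (SetF.neg (.eq 1 0)) (.all (.imp (.mem 0 2) (.imp (.mem 0 1) .bot))))))))
    (.ex (.all (.imp (.mem 0 2)
      (.ex (.and (.mem 0 2) (.and (.mem 0 1)
        (.all (.imp (.mem 0 3) (.imp (.mem 0 2) (.eq 0 1)))))))))))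

/-! ### Axiom schemes and theories -/

/-- The set induction scheme. -/
def SetInductionScheme : Set SetF := {F | ∃ φ : SetF, F = setInd φ}

/-- The full separation scheme. -/
def SeparationScheme : Set SetF := {F | ∃ φ : SetF, F = sep φ}

/-- Separation for formulas in a class `C`. -/
def SepScheme (C : Set SetF) : Set SetF := {F | ∃ φ ∈ C, F = sep φ}

/-- The Δ₀- (bounded) separation scheme. -/
def Delta0SeparationScheme : Set SetF := {F | ∃ φ : SetF, Delta0 φ ∧ F = sep φ}

/-- The full collection scheme. -/
def CollectionScheme : Set SetF := {F | ∃ φ : SetF, F = coll φ}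

/-- The Δ₀- (bounded) collection scheme. -/
def Delta0CollectionScheme : Set SetF := {F | ∃ φ : SetF, Delta0 φ ∧ F = coll φ}

/-- The full strong collection scheme. -/
def StrongCollectionScheme : Set SetF := {F | ∃ φ : SetF, F = strongColl φ}

/-- The bounded strong collection scheme (strong collection for Δ₀-formulas). -/
def BoundedStrongCollectionScheme : Set SetF := {F | ∃ φ : SetF, Delta0 φ ∧ F = strongColl φ}

/-- The full subset collection scheme. -/
def SubsetCollectionScheme : Set SetF := {F | ∃ ψ : SetF, F = subsetColl ψ}

/-- The set-bounded subset collection scheme: subset collection for Δ₀-formulas `ψ(x,y,u)`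
in which the variable `u` is set-bounded, i.e. `ψ(x,y,u) → u ∈ t` is intuitionistically
derivable for some variable (term) `t` occurring in `ψ`. -/
def SetBoundedSubsetCollectionScheme : Set SetF :=
  {F | ∃ ψ : SetF, ∃ t : ℕ, Delta0 ψ ∧ SetF.FreeIn t ψ ∧
        Prf ∅ (.imp ψ (.mem 2 t)) ∧ F = subsetColl ψ}

/-- Intuitionistic Kripke–Platek set theory `IKP`. -/
def IKP : Set SetF :=
  {extensionality, emptySet, pairing, unionAx, infinityIKP} ∪
    SetInductionScheme ∪ Delta0SeparationScheme ∪ Delta0CollectionScheme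

/-- `IKP⁺`: `IKP` plus bounded strong collection and set-bounded subset collection. -/
def IKPplus : Set SetF :=
  IKP ∪ BoundedStrongCollectionScheme ∪ SetBoundedSubsetCollectionScheme

/-- The theory `IKP⁺ + MP + AC`. -/
def IKPplusMPAC : Set SetF := IKPplus ∪ {markov, choiceAx}

/-- Constructive Zermelo–Fraenkel set theory `CZF`. -/
def CZF : Set SetF :=
  {extensionality, emptySet, pairing, unionAx, strongInfinity} ∪
    SetInductionScheme ∪ Delta0SeparationScheme ∪ StrongCollectionScheme ∪
    SubsetCollectionScheme

/-- Intuitionistic Zermelo–Fraenkel set theory `IZF`. -/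
def IZF : Set SetF :=
  {extensionality, emptySet, pairing, unionAx, strongInfinity, powerSet} ∪
    SetInductionScheme ∪ SeparationScheme ∪ CollectionScheme

/-- The axioms of classical `ZF`. -/
def ZFAxioms : Set SetF :=
  {extensionality, emptySet, pairing, unionAx, powerSet, zfInfinity} ∪
    SetInductionScheme ∪ SeparationScheme ∪ CollectionScheme

end Axioms


/-! ## Environments -/

/-- Prepend a value to an environment (de Bruijn). -/
def econs {α : Type*} (a : α) (env : ℕ → α) : ℕ → α
  | 0 => a
  | n + 1 => env n

/-! ## Classical (Tarski) satisfaction in a `ZFSet` -/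

/-- `ZFSet` in the lowest universe. -/
abbrev ZSet : Type 1 := ZFSet.{0}


/-- Classical satisfaction of a set-theoretic formula in the transitive domain `M`,
with the true membership and equality relations. -/
def CSat (M : ZSet) : (ℕ → ZSet) → SetF → Prop
  | env, .mem i j => env i ∈ env j
  | env, .eq i j => env i = env j
  | _, .bot => False
  | env, .and φ ψ => CSat M env φ ∧ CSat M env ψ
  | env, .or φ ψ => CSat M env φ ∨ CSat M env ψ
  | env, .imp φ ψ => CSat M env φ → CSat M env ψ
  | env, .ex φ => ∃ a : ZSet, a ∈ M ∧ CSat M (econs a env) φ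
  | env, .all φ => ∀ a : ZSet, a ∈ M → CSat M (econs a env) φ

/-- `M` satisfies `φ` for all parameters from `M`. -/
def ZSatisfies (M : ZSet) (φ : SetF) : Prop :=
  ∀ env : ℕ → ZSet, (∀ n, env n ∈ M) → CSat M env φ

/-- `M` is a (nonempty) model of all axioms of `ZF`. -/
def ModelsZF (M : ZSet) : Prop :=
  (∃ x, x ∈ M) ∧ ∀ φ ∈ Axioms.ZFAxioms, ZSatisfies M φ

/-- `M` is a countable transitive model of `ZFC`. -/
def IsCTMofZFC (M : ZSet) : Prop :=
  M.IsTransitive ∧ {x : ZSet | x ∈ M}.Countable ∧ ModelsZF M ∧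
    ZSatisfies M Axioms.choiceAx

/-- There exists a countable transitive model of `ZFC`. -/
def ExistsCTM : Prop := ∃ M : ZSet, IsCTMofZFC M

/-! ## Kripke semantics for the language of set theory -/

/-- The forcing relation over a Kripke frame `K` with domains `D` and membership
relations `e`. -/
def SForces {K : Type u} [Preorder K] {α : Type v} (D : K → Set α) (e : K → α → α → Prop) :
    K → (ℕ → α) → SetF → Prop
  | v, env, .mem i j => e v (env i) (env j)
  | _, env, .eq i j => env i = env j
  | _, _, .bot => False
  | v, env, .and φ ψ => SForces D e v env φ ∧ SForces D e v env ψ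
  | v, env, .or φ ψ => SForces D e v env φ ∨ SForces D e v env ψ
  | v, env, .imp φ ψ => ∀ w, v ≤ w → SForces D e w env φ → SForces D e w env ψ
  | v, env, .ex φ => ∃ a, a ∈ D v ∧ SForces D e v (econs a env) φ
  | v, env, .all φ => ∀ w, v ≤ w → ∀ a, a ∈ D w → SForces D e w (econs a env) φ

/-- A Kripke model for set theory: a Kripke frame with increasing domains `D_v` and
increasing membership relations `e_v` on `D_v`. -/
structure SetKModel (K : Type u) [Preorder K] (α : Type v) where
  D : K → Set α
  e : K → α → α → Prop
  e_dom : ∀ v a b, e v a b → a ∈ D v ∧ b ∈ D v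
  D_mono : ∀ ⦃v w : K⦄, v ≤ w → D v ⊆ D w
  e_mono : ∀ ⦃v w : K⦄, v ≤ w → ∀ a b, e v a b → e w a b

/-- Forcing in a Kripke model for set theory. -/
def SetKModel.Forces {K : Type u} [Preorder K] {α : Type v} (M : SetKModel K α)
    (v : K) (env : ℕ → α) (φ : SetF) : Prop :=
  SForces M.D M.e v env φ

/-! ## Kripke models with classical domains -/

/-- A sound assignment: an assignment of transitive models of `ZF` to the nodes of a
Kripke frame, monotone with respect to inclusion. -/
structure SoundAssignment (K : Type u) [Preorder K] where
  M : K → ZSet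
  transitive : ∀ v, (M v).IsTransitive
  modelsZF : ∀ v, ModelsZF (M v)
  mono : ∀ ⦃v w : K⦄, v ≤ w → M v ⊆ M w

/-- Forcing in the Kripke model with classical domains `K(𝓜)` arising from a sound
assignment: domains are the `𝓜_v` and `e_v` is true membership restricted to `𝓜_v`. -/
def SoundAssignment.Forces {K : Type u} [Preorder K] (𝓜 : SoundAssignment K)
    (v : K) (env : ℕ → ZSet) (φ : SetF) : Prop :=
  SForces (fun v => {x : ZSet | x ∈ 𝓜.M v})
    (fun v a b => a ∈ b ∧ a ∈ 𝓜.M v ∧ b ∈ 𝓜.M v) v env φ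

/-- `K(𝓜) ⊩ φ` : the formula `φ` is forced at every node, for all parameters. -/
def SoundAssignment.ForcesAll {K : Type u} [Preorder K] (𝓜 : SoundAssignment K)
    (φ : SetF) : Prop :=
  ∀ (v : K) (env : ℕ → ZSet), (∀ n, env n ∈ 𝓜.M v) → 𝓜.Forces v env φ


/-! ## Propositional logic and its Kripke semantics -/

/-- Propositional formulas. -/
inductive PForm : Type where
  | atom : ℕ → PForm
  | bot : PForm
  | and : PForm → PForm → PForm
  | or  : PForm → PForm → PForm
  | imp : PForm → PForm → PForm

namespace PForm
def neg (φ : PForm) : PForm := .imp φ .bot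
end PForm

/-- The propositional forcing relation over a Kripke frame with valuation `V`. -/
def PForces {K : Type u} [Preorder K] (V : ℕ → Set K) : K → PForm → Prop
  | v, .atom n => v ∈ V n
  | _, .bot => False
  | v, .and φ ψ => PForces V v φ ∧ PForces V v ψ
  | v, .or φ ψ => PForces V v φ ∨ PForces V v ψ
  | v, .imp φ ψ => ∀ w, v ≤ w → PForces V w φ → PForces V w ψ

/-- A valuation is persistent if each `V p` is upward closed. -/
def PersistentVal {K : Type u} [Preorder K] (V : ℕ → Set K) : Prop :=
  ∀ (n : ℕ) ⦃v w : K⦄, v ≤ w → v ∈ V n → w ∈ V n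

/-- A Kripke frame: a partially ordered set. -/
structure KFrame : Type 1 where
  World : Type
  [ord : PartialOrder World]

attribute [instance] KFrame.ord

/-- A propositional formula is valid on a frame if it is forced at every node under
every persistent valuation. -/
def PValidOnFrame (F : KFrame) (φ : PForm) : Prop :=
  ∀ V : ℕ → Set F.World, PersistentVal V → ∀ v : F.World, PForces V v φ

/-- The propositional logic of a class of Kripke frames. -/
def PLogicOfFrames (𝓒 : Set KFrame) : Set PForm :=
  {φ | ∀ F ∈ 𝓒, PValidOnFrame F φ}

/-- Intuitionistic propositional logic (the logic of all Kripke frames). -/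
def IPC : Set PForm := {φ | ∀ F : KFrame, PValidOnFrame F φ}

/-- Classical evaluation of a propositional formula. -/
def PEval (f : ℕ → Prop) : PForm → Prop
  | .atom n => f n
  | .bot => False
  | .and φ ψ => PEval f φ ∧ PEval f ψ
  | .or φ ψ => PEval f φ ∨ PEval f ψ
  | .imp φ ψ => PEval f φ → PEval f ψ

/-- Classical propositional logic. -/
def CPC : Set PForm := {φ | ∀ f : ℕ → Prop, PEval f φ}

/-- A propositional logic is Kripke-complete if it is the logic of some class of
Kripke frames. -/
def PKripkeComplete (J : Set PForm) : Prop := ∃ 𝓒 : Set KFrame, J = PLogicOfFrames 𝓒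

/-- An intermediate propositional logic: `IPC ⊆ J ⊆ CPC`. -/
def IntermediatePLogic (J : Set PForm) : Prop := IPC ⊆ J ∧ J ⊆ CPC

/-! ### Propositional translations into the language of set theory -/

/-- A propositional translation assigns a set-theoretic sentence to every
propositional letter. -/
def IsPropTranslation (σ : ℕ → SetF) : Prop := ∀ n, SetF.Sentence (σ n)

/-- Extension of a propositional translation to all propositional formulas. -/
def ptrans (σ : ℕ → SetF) : PForm → SetF
  | .atom n => σ n
  | .bot => .bot
  | .and φ ψ => .and (ptrans σ φ) (ptrans σ ψ)
  | .or φ ψ => .or (ptrans σ φ) (ptrans σ ψ)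
  | .imp φ ψ => .imp (ptrans σ φ) (ptrans σ ψ)

/-- `T(J)` for a propositional logic `J`: the theory `T` together with all translations
of theorems of `J`. -/
def PTheoryOf (T : Set SetF) (J : Set PForm) : Set SetF :=
  T ∪ {F | ∃ A ∈ J, ∃ σ : ℕ → SetF, IsPropTranslation σ ∧ F = ptrans σ A}

/-- The propositional logic `L(S)` of a set theory `S`. -/
def PLogicOfTheory (S : Set SetF) : Set PForm :=
  {φ | ∀ σ : ℕ → SetF, IsPropTranslation σ → Prf S (ptrans σ φ)}

/-- The Σ₃-restricted propositional logic `L^{Σ₃}(S)` of a set theory `S`. -/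
def PLogicOfTheorySigma3 (S : Set SetF) : Set PForm :=
  {φ | ∀ σ : ℕ → SetF, IsPropTranslation σ → (∀ n, Sigma3 (σ n)) →
        Prf S (ptrans σ φ)}

/-! ## First-order logic in a relational language (without equality) -/

/-- A purely relational first-order language: a type of relation symbols with
arities. -/
structure Lang : Type 1 where
  R : Type
  ar : R → ℕ

/-- First-order formulas over a relational language `L` (de Bruijn indices,
no equality). -/
inductive QForm (L : Lang) : Type where
  | rel : (r : L.R) → (Fin (L.ar r) → ℕ) → QForm L
  | bot : QForm L
  | and : QForm L → QForm L → QForm L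
  | or  : QForm L → QForm L → QForm L
  | imp : QForm L → QForm L → QForm L
  | ex  : QForm L → QForm L
  | all : QForm L → QForm L

namespace QForm

variable {L : Lang}

def neg (φ : QForm L) : QForm L := .imp φ .bot

def rename (f : ℕ → ℕ) : QForm L → QForm L
  | rel r v => rel r (fun i => f (v i))
  | bot => bot
  | and φ ψ => and (rename f φ) (rename f ψ)
  | or φ ψ => or (rename f φ) (rename f ψ)
  | imp φ ψ => imp (rename f φ) (rename f ψ)
  | ex φ => ex (rename (SetF.liftR f) φ)
  | all φ => all (rename (SetF.liftR f) φ)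

def shift (φ : QForm L) : QForm L := rename Nat.succ φ

def instVar (k : ℕ) (φ : QForm L) : QForm L :=
  rename (fun n => match n with | 0 => k | m + 1 => m) φ

end QForm

/-- Natural deduction for intuitionistic first-order logic (no equality) over a
relational language `L`. -/
inductive QPrf {L : Lang} : Set (QForm L) → QForm L → Prop where
  | hyp {Γ φ} : φ ∈ Γ → QPrf Γ φ
  | botE {Γ φ} : QPrf Γ .bot → QPrf Γ φ
  | andI {Γ φ ψ} : QPrf Γ φ → QPrf Γ ψ → QPrf Γ (.and φ ψ)
  | andE₁ {Γ φ ψ} : QPrf Γ (.and φ ψ) → QPrf Γ φ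
  | andE₂ {Γ φ ψ} : QPrf Γ (.and φ ψ) → QPrf Γ ψ
  | orI₁ {Γ φ ψ} : QPrf Γ φ → QPrf Γ (.or φ ψ)
  | orI₂ {Γ φ ψ} : QPrf Γ ψ → QPrf Γ (.or φ ψ)
  | orE {Γ φ ψ χ} : QPrf Γ (.or φ ψ) → QPrf (insert φ Γ) χ → QPrf (insert ψ Γ) χ → QPrf Γ χ
  | impI {Γ φ ψ} : QPrf (insert φ Γ) ψ → QPrf Γ (.imp φ ψ)
  | impE {Γ φ ψ} : QPrf Γ (.imp φ ψ) → QPrf Γ φ → QPrf Γ ψ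
  | allI {Γ φ} : QPrf (QForm.shift '' Γ) φ → QPrf Γ (.all φ)
  | allE {Γ φ} (k : ℕ) : QPrf Γ (.all φ) → QPrf Γ (φ.instVar k)
  | exI {Γ φ} (k : ℕ) : QPrf Γ (φ.instVar k) → QPrf Γ (.ex φ)
  | exE {Γ φ ψ} : QPrf Γ (.ex φ) → QPrf (insert φ (QForm.shift '' Γ)) ψ.shift → QPrf Γ ψ

/-- Intuitionistic first-order logic `IQC` over the language `L`. -/
def IQC (L : Lang) : Set (QForm L) := {φ | QPrf ∅ φ}

/-! ### Kripke models for `IQC` -/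

/-- A Kripke model for intuitionistic first-order logic over the relational language
`L`: increasing (nonempty) domains and increasing interpretations of the relation
symbols on the domains. -/
structure QModel (L : Lang) (K : Type u) [Preorder K] (α : Type v) where
  D : K → Set α
  I : (v : K) → (r : L.R) → ((Fin (L.ar r) → α) → Prop)
  D_ne : ∀ v, (D v).Nonempty
  D_mono : ∀ ⦃v w : K⦄, v ≤ w → D v ⊆ D w
  I_mono : ∀ ⦃v w : K⦄, v ≤ w → ∀ r t, I v r t → I w r t
  I_dom : ∀ v r t, I v r t → ∀ i, t i ∈ D v

/-- The forcing relation in a Kripke model for `IQC`. -/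
def QForces {L : Lang} {K : Type u} [Preorder K] {α : Type v} (M : QModel L K α) :
    K → (ℕ → α) → QForm L → Prop
  | v, env, .rel r t => M.I v r (fun i => env (t i))
  | _, _, .bot => False
  | v, env, .and φ ψ => QForces M v env φ ∧ QForces M v env ψ
  | v, env, .or φ ψ => QForces M v env φ ∨ QForces M v env ψ
  | v, env, .imp φ ψ => ∀ w, v ≤ w → QForces M w env φ → QForces M w env ψ
  | v, env, .ex φ => ∃ a, a ∈ M.D v ∧ QForces M v (econs a env) φ
  | v, env, .all φ => ∀ w, v ≤ w → ∀ a, a ∈ M.D w → QForces M w (econs a env) φ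

/-- Validity of a first-order formula in all Kripke models whose underlying frame
satisfies a property `P`. -/
def QValidOnFrames (L : Lang) (P : KFrame → Prop) (φ : QForm L) : Prop :=
  ∀ F : KFrame, P F → ∀ (α : Type) (M : QModel L F.World α) (v : F.World)
    (env : ℕ → α), (∀ n, env n ∈ M.D v) → QForces M v env φ

/-- The frame has depth at most `k`: there is no strictly increasing chain of more
than `k` nodes. -/
def FrameDepthLE (k : ℕ) (F : KFrame) : Prop :=
  ∀ f : Fin (k + 1) → F.World, ¬ StrictMono f

/-- The frame is linearly ordered. -/
def FrameLinear (F : KFrame) : Prop := ∀ a b : F.World, a ≤ b ∨ b ≤ a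

/-- `QHP_k`: the first-order logic of Kripke frames of depth at most `k`. -/
def QHP (L : Lang) (k : ℕ) : Set (QForm L) := {φ | QValidOnFrames L (FrameDepthLE k) φ}

/-- `QLC`: the first-order logic of linear Kripke frames. -/
def QLCLogic (L : Lang) : Set (QForm L) := {φ | QValidOnFrames L FrameLinear φ}

/-- The instances of the scheme `KF`: `¬¬∀x(P(x) ∨ ¬P(x))`. -/
def KFScheme (L : Lang) : Set (QForm L) :=
  {F | ∃ ψ : QForm L, F = QForm.neg (QForm.neg (.all (.or ψ (QForm.neg ψ))))}

/-- The logic `IQC + KF`. -/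
def IQCKF (L : Lang) : Set (QForm L) := {φ | QPrf (KFScheme L) φ}

/-- Classical (Tarski) satisfaction of a first-order formula. -/
def TSat {L : Lang} {α : Type v} (I : (r : L.R) → (Fin (L.ar r) → α) → Prop) :
    (ℕ → α) → QForm L → Prop
  | env, .rel r t => I r (fun i => env (t i))
  | _, .bot => False
  | env, .and φ ψ => TSat I env φ ∧ TSat I env ψ
  | env, .or φ ψ => TSat I env φ ∨ TSat I env ψ
  | env, .imp φ ψ => TSat I env φ → TSat I env ψ
  | env, .ex φ => ∃ a : α, TSat I (econs a env) φ
  | env, .all φ => ∀ a : α, TSat I (econs a env) φ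

/-- Classical first-order logic `CQC` over the language `L`. -/
def CQC (L : Lang) : Set (QForm L) :=
  {φ | ∀ (α : Type), Nonempty α →
    ∀ (I : (r : L.R) → (Fin (L.ar r) → α) → Prop) (env : ℕ → α), TSat I env φ}

/-! ### First-order translations into the language of set theory -/

/-- A first-order translation maps every `n`-ary relation symbol to a set-theoretic
formula with (at most) `n` free variables. -/
def IsQTranslation (L : Lang) (σ : (r : L.R) → SetF) : Prop :=
  ∀ r, SetF.ClosedUnder (L.ar r) (σ r)

/-- Extension of a first-order translation to all first-order formulas. -/
def qtrans {L : Lang} (σ : (r : L.R) → SetF) : QForm L → SetF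
  | .rel r v => (σ r).rename (fun i => if h : i < L.ar r then v ⟨i, h⟩ else i)
  | .bot => .bot
  | .and φ ψ => .and (qtrans σ φ) (qtrans σ ψ)
  | .or φ ψ => .or (qtrans σ φ) (qtrans σ ψ)
  | .imp φ ψ => .imp (qtrans σ φ) (qtrans σ ψ)
  | .ex φ => .ex (qtrans σ φ)
  | .all φ => .all (qtrans σ φ)

/-- The relative translation `(φ^E)^σ`: quantifiers are relativised to the fresh
unary predicate `E`, whose interpretation under the translation is the set-theoretic
formula `ε` (with free variable `0`). -/
def relTrans {L : Lang} (ε : SetF) (σ : (r : L.R) → SetF) : QForm L → SetF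
  | .rel r v => (σ r).rename (fun i => if h : i < L.ar r then v ⟨i, h⟩ else i)
  | .bot => .bot
  | .and φ ψ => .and (relTrans ε σ φ) (relTrans ε σ ψ)
  | .or φ ψ => .or (relTrans ε σ φ) (relTrans ε σ ψ)
  | .imp φ ψ => .imp (relTrans ε σ φ) (relTrans ε σ ψ)
  | .ex φ => .ex (.and ε (relTrans ε σ φ))
  | .all φ => .all (.imp ε (relTrans ε σ φ))

/-- The first-order logic `QL(T)` of a set theory `T`. -/
def QL (L : Lang) (T : Set SetF) : Set (QForm L) :=
  {φ | ∀ σ, IsQTranslation L σ → Prf T (qtrans σ φ)}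

/-- The relative first-order logic `QL_E(T)` of a set theory `T`. -/
def QLE (L : Lang) (T : Set SetF) : Set (QForm L) :=
  {φ | ∀ (ε : SetF) (σ : (r : L.R) → SetF), SetF.ClosedUnder 1 ε →
        IsQTranslation L σ → Prf T (relTrans ε σ φ)}

/-- The Σ₃-restricted relative first-order logic `QL_E^{Σ₃}(T)` of a set theory `T`. -/
def QLESigma3 (L : Lang) (T : Set SetF) : Set (QForm L) :=
  {φ | ∀ (ε : SetF) (σ : (r : L.R) → SetF), SetF.ClosedUnder 1 ε → Sigma3 ε →
        IsQTranslation L σ → (∀ r, Sigma3 (σ r)) → Prf T (relTrans ε σ φ)}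

/-- The `C`-restricted first-order logic `QL^C(T)` of a set theory `T`:
only translations whose values lie in the class `C` are considered. -/
def QLRestr (L : Lang) (C : Set SetF) (T : Set SetF) : Set (QForm L) :=
  {φ | ∀ σ, IsQTranslation L σ → (∀ r, σ r ∈ C) → Prf T (qtrans σ φ)}

/-- `T(J)` for a first-order logic `J`: the theory `T` together with all translations
of theorems of `J`. -/
def QTheoryOf (L : Lang) (T : Set SetF) (J : Set (QForm L)) : Set SetF :=
  T ∪ {F | ∃ A ∈ J, ∃ σ, IsQTranslation L σ ∧ F = qtrans σ A}

/-! ## First-order logic with equality in a relational language -/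

/-- First-order formulas with equality over a relational language `L`. -/
inductive QEForm (L : Lang) : Type where
  | rel : (r : L.R) → (Fin (L.ar r) → ℕ) → QEForm L
  | eq : ℕ → ℕ → QEForm L
  | bot : QEForm L
  | and : QEForm L → QEForm L → QEForm L
  | or  : QEForm L → QEForm L → QEForm L
  | imp : QEForm L → QEForm L → QEForm L
  | ex  : QEForm L → QEForm L
  | all : QEForm L → QEForm L

namespace QEForm

variable {L : Lang}

def neg (φ : QEForm L) : QEForm L := .imp φ .bot

def rename (f : ℕ → ℕ) : QEForm L → QEForm L
  | rel r v => rel r (fun i => f (v i))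
  | eq i j => eq (f i) (f j)
  | bot => bot
  | and φ ψ => and (rename f φ) (rename f ψ)
  | or φ ψ => or (rename f φ) (rename f ψ)
  | imp φ ψ => imp (rename f φ) (rename f ψ)
  | ex φ => ex (rename (SetF.liftR f) φ)
  | all φ => all (rename (SetF.liftR f) φ)

def shift (φ : QEForm L) : QEForm L := rename Nat.succ φ

def instVar (k : ℕ) (φ : QEForm L) : QEForm L :=
  rename (fun n => match n with | 0 => k | m + 1 => m) φ

end QEForm

/-- Natural deduction for intuitionistic first-order logic with equality over a
relational language `L`. -/
inductive QEPrf {L : Lang} : Set (QEForm L) → QEForm L → Prop where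
  | hyp {Γ φ} : φ ∈ Γ → QEPrf Γ φ
  | botE {Γ φ} : QEPrf Γ .bot → QEPrf Γ φ
  | andI {Γ φ ψ} : QEPrf Γ φ → QEPrf Γ ψ → QEPrf Γ (.and φ ψ)
  | andE₁ {Γ φ ψ} : QEPrf Γ (.and φ ψ) → QEPrf Γ φ
  | andE₂ {Γ φ ψ} : QEPrf Γ (.and φ ψ) → QEPrf Γ ψ
  | orI₁ {Γ φ ψ} : QEPrf Γ φ → QEPrf Γ (.or φ ψ)
  | orI₂ {Γ φ ψ} : QEPrf Γ ψ → QEPrf Γ (.or φ ψ)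
  | orE {Γ φ ψ χ} : QEPrf Γ (.or φ ψ) → QEPrf (insert φ Γ) χ → QEPrf (insert ψ Γ) χ →
      QEPrf Γ χ
  | impI {Γ φ ψ} : QEPrf (insert φ Γ) ψ → QEPrf Γ (.imp φ ψ)
  | impE {Γ φ ψ} : QEPrf Γ (.imp φ ψ) → QEPrf Γ φ → QEPrf Γ ψ
  | allI {Γ φ} : QEPrf (QEForm.shift '' Γ) φ → QEPrf Γ (.all φ)
  | allE {Γ φ} (k : ℕ) : QEPrf Γ (.all φ) → QEPrf Γ (φ.instVar k)
  | exI {Γ φ} (k : ℕ) : QEPrf Γ (φ.instVar k) → QEPrf Γ (.ex φ)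
  | exE {Γ φ ψ} : QEPrf Γ (.ex φ) → QEPrf (insert φ (QEForm.shift '' Γ)) ψ.shift →
      QEPrf Γ ψ
  | eqRefl {Γ} (i : ℕ) : QEPrf Γ (.eq i i)
  | eqSym {Γ i j} : QEPrf Γ (.eq i j) → QEPrf Γ (.eq j i)
  | eqTrans {Γ i j k} : QEPrf Γ (.eq i j) → QEPrf Γ (.eq j k) → QEPrf Γ (.eq i k)
  | relCong {Γ} {r : L.R} {v : Fin (L.ar r) → ℕ} {p : Fin (L.ar r)} {i j : ℕ} :
      QEPrf Γ (.eq i j) → QEPrf Γ (.rel r v) → v p = i →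
      QEPrf Γ (.rel r (Function.update v p j))

/-- Intuitionistic first-order logic with equality `IQC⁼` over the language `L`. -/
def IQCeq (L : Lang) : Set (QEForm L) := {φ | QEPrf ∅ φ}

/-- Extension of a first-order equality translation (which sends equality to
equality) to all first-order formulas with equality. -/
def qetrans {L : Lang} (σ : (r : L.R) → SetF) : QEForm L → SetF
  | .rel r v => (σ r).rename (fun i => if h : i < L.ar r then v ⟨i, h⟩ else i)
  | .eq i j => .eq i j
  | .bot => .bot
  | .and φ ψ => .and (qetrans σ φ) (qetrans σ ψ)
  | .or φ ψ => .or (qetrans σ φ) (qetrans σ ψ)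
  | .imp φ ψ => .imp (qetrans σ φ) (qetrans σ ψ)
  | .ex φ => .ex (qetrans σ φ)
  | .all φ => .all (qetrans σ φ)

/-- The first-order logic with equality `QL⁼(T)` of a set theory `T`. -/
def QLeq (L : Lang) (T : Set SetF) : Set (QEForm L) :=
  {φ | ∀ σ, IsQTranslation L σ → Prf T (qetrans σ φ)}

/-- The full countable relational language, with countably many relation symbols of
every arity. -/
def FullLang : Lang := ⟨ℕ × ℕ, Prod.snd⟩




/-! ### Basic environment lemmas -/

theorem econs_zero {α : Type*} (a : α) (env : ℕ → α) : econs a env 0 = a := rfl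
theorem econs_succ {α : Type*} (a : α) (env : ℕ → α) (n : ℕ) : econs a env (n + 1) = env n := rfl

theorem econs_mem {M : ZSet} {a : ZSet} {env : ℕ → ZSet} (ha : a ∈ M)
    (henv : ∀ n, env n ∈ M) : ∀ n, econs a env n ∈ M := by
  intro n; cases n with
  | zero => exact ha
  | succ m => exact henv m

theorem econs_comp_liftR {α : Type*} (a : α) (env : ℕ → α) (f : ℕ → ℕ) :
    (econs a env) ∘ (SetF.liftR f) = econs a (env ∘ f) := by
  funext n; cases n with
  | zero => rfl
  | succ m => rfl

/-! ### Truth in the full universe of sets -/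

/-- Tarski satisfaction over the universe of all `ZFSet`s. -/
def TSat0 : (ℕ → ZSet) → SetF → Prop
  | env, .mem i j => env i ∈ env j
  | env, .eq i j => env i = env j
  | _, .bot => False
  | env, .and φ ψ => TSat0 env φ ∧ TSat0 env ψ
  | env, .or φ ψ => TSat0 env φ ∨ TSat0 env ψ
  | env, .imp φ ψ => TSat0 env φ → TSat0 env ψ
  | env, .ex φ => ∃ a : ZSet, TSat0 (econs a env) φ
  | env, .all φ => ∀ a : ZSet, TSat0 (econs a env) φ

theorem TSat0_rename (φ : SetF) : ∀ (f : ℕ → ℕ) (env : ℕ → ZSet),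
    TSat0 env (φ.rename f) ↔ TSat0 (env ∘ f) φ := by
  induction φ with
  | mem i j => intro f env; rfl
  | eq i j => intro f env; rfl
  | bot => intro f env; rfl
  | and φ ψ ihφ ihψ => intro f env; exact and_congr (ihφ f env) (ihψ f env)
  | or φ ψ ihφ ihψ => intro f env; exact or_congr (ihφ f env) (ihψ f env)
  | imp φ ψ ihφ ihψ => intro f env; exact imp_congr (ihφ f env) (ihψ f env)
  | ex φ ih =>
      intro f env
      refine exists_congr fun a => ?_
      rw [ih (SetF.liftR f) (econs a env), econs_comp_liftR]
  | all φ ih =>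
      intro f env
      refine forall_congr' fun a => ?_
      rw [ih (SetF.liftR f) (econs a env), econs_comp_liftR]

theorem CSat_rename (M : ZSet) (φ : SetF) : ∀ (f : ℕ → ℕ) (env : ℕ → ZSet),
    CSat M env (φ.rename f) ↔ CSat M (env ∘ f) φ := by
  induction φ with
  | mem i j => intro f env; rfl
  | eq i j => intro f env; rfl
  | bot => intro f env; rfl
  | and φ ψ ihφ ihψ => intro f env; exact and_congr (ihφ f env) (ihψ f env)
  | or φ ψ ihφ ihψ => intro f env; exact or_congr (ihφ f env) (ihψ f env)
  | imp φ ψ ihφ ihψ => intro f env; exact imp_congr (ihφ f env) (ihψ f env)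
  | ex φ ih =>
      intro f env
      refine exists_congr fun a => and_congr_right fun _ => ?_
      rw [ih (SetF.liftR f) (econs a env), econs_comp_liftR]
  | all φ ih =>
      intro f env
      refine forall_congr' fun a => imp_congr_right fun _ => ?_
      rw [ih (SetF.liftR f) (econs a env), econs_comp_liftR]

theorem SForces_rename {K : Type} [Preorder K] {α : Type*} (D : K → Set α)
    (e : K → α → α → Prop) (φ : SetF) : ∀ (f : ℕ → ℕ) (v : K) (env : ℕ → α),
    SForces D e v env (φ.rename f) ↔ SForces D e v (env ∘ f) φ := by
  induction φ with
  | mem i j => intro f v env; rfl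
  | eq i j => intro f v env; rfl
  | bot => intro f v env; rfl
  | and φ ψ ihφ ihψ => intro f v env; exact and_congr (ihφ f v env) (ihψ f v env)
  | or φ ψ ihφ ihψ => intro f v env; exact or_congr (ihφ f v env) (ihψ f v env)
  | imp φ ψ ihφ ihψ =>
      intro f v env
      exact forall_congr' fun w => imp_congr_right fun _ =>
        imp_congr (ihφ f w env) (ihψ f w env)
  | ex φ ih =>
      intro f v env
      refine exists_congr fun a => and_congr_right fun _ => ?_
      rw [ih (SetF.liftR f) v (econs a env), econs_comp_liftR]
  | all φ ih =>
      intro f v env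
      refine forall_congr' fun w => imp_congr_right fun _ =>
        forall_congr' fun a => imp_congr_right fun _ => ?_
      rw [ih (SetF.liftR f) w (econs a env), econs_comp_liftR]


/-! ### Absoluteness of `Δ₀`-formulas -/

theorem CSat_delta0 {M : ZSet} (hM : M.IsTransitive) {φ : SetF} (h : Delta0 φ) :
    ∀ env : ℕ → ZSet, (∀ n, env n ∈ M) → (CSat M env φ ↔ TSat0 env φ) := by
  induction h with
  | mem i j => intro env _; rfl
  | eq i j => intro env _; rfl
  | bot => intro env _; rfl
  | and h1 h2 ih1 ih2 => intro env he; exact and_congr (ih1 env he) (ih2 env he)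
  | or h1 h2 ih1 ih2 => intro env he; exact or_congr (ih1 env he) (ih2 env he)
  | imp h1 h2 ih1 ih2 => intro env he; exact imp_congr (ih1 env he) (ih2 env he)
  | ball k h ih =>
      intro env he
      constructor
      · intro H a ha
        have haM : a ∈ M := hM (env k) (he k) ha
        exact (ih (econs a env) (econs_mem haM he)).1 (H a haM ha)
      · intro H a haM ha
        exact (ih (econs a env) (econs_mem haM he)).2 (H a ha)
  | bex k h ih =>
      intro env he
      constructor
      · rintro ⟨a, haM, ha, hφ⟩
        exact ⟨a, ha, (ih (econs a env) (econs_mem haM he)).1 hφ⟩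
      · rintro ⟨a, ha, hφ⟩
        have haM : a ∈ M := hM (env k) (he k) ha
        exact ⟨a, haM, ha, (ih (econs a env) (econs_mem haM he)).2 hφ⟩

section
variable {K : Type} [PartialOrder K] (𝓜 : SoundAssignment K)

theorem Forces_delta0 {φ : SetF} (h : Delta0 φ) :
    ∀ (v : K) (env : ℕ → ZSet), (∀ n, env n ∈ 𝓜.M v) →
      (𝓜.Forces v env φ ↔ TSat0 env φ) := by
  induction h with
  | mem i j =>
      intro v env he
      exact ⟨fun h' => h'.1, fun h' => ⟨h', he i, he j⟩⟩
  | eq i j => intro v env _; rfl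
  | bot => intro v env _; rfl
  | and h1 h2 ih1 ih2 => intro v env he; exact and_congr (ih1 v env he) (ih2 v env he)
  | or h1 h2 ih1 ih2 => intro v env he; exact or_congr (ih1 v env he) (ih2 v env he)
  | imp h1 h2 ih1 ih2 =>
      intro v env he
      constructor
      · intro H h1'
        exact (ih2 v env he).1 (H v le_rfl ((ih1 v env he).2 h1'))
      · intro H w hw hφ
        have hew : ∀ n, env n ∈ 𝓜.M w := fun n => 𝓜.mono hw (he n)
        exact (ih2 w env hew).2 (H ((ih1 w env hew).1 hφ))
  | ball k h ih =>
      intro v env he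
      constructor
      · intro H a ha
        have haM : a ∈ 𝓜.M v := (𝓜.transitive v) (env k) (he k) ha
        have := H v le_rfl a haM v le_rfl ⟨ha, haM, he k⟩
        exact (ih v (econs a env) (econs_mem haM he)).1 this
      · intro H w hw a ha w' hw' hmem
        have hew' : ∀ n, econs a env n ∈ 𝓜.M w' :=
          econs_mem hmem.2.1 (fun n => 𝓜.mono (hw.trans hw') (he n))
        exact (ih w' (econs a env) hew').2 (H a hmem.1)
  | bex k h ih =>
      intro v env he
      constructor
      · rintro ⟨a, ha, hmem, hφ⟩
        exact ⟨a, hmem.1, (ih v (econs a env) (econs_mem ha he)).1 hφ⟩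
      · rintro ⟨a, ha, hφ⟩
        have haM : a ∈ 𝓜.M v := (𝓜.transitive v) (env k) (he k) ha
        exact ⟨a, haM, ⟨ha, haM, he k⟩,
          (ih v (econs a env) (econs_mem haM he)).2 hφ⟩

/-- Persistence of forcing. -/
theorem Forces_mono (φ : SetF) : ∀ {v w : K}, v ≤ w → ∀ env,
    𝓜.Forces v env φ → 𝓜.Forces w env φ := by
  induction φ with
  | mem i j => intro v w hvw env h; exact ⟨h.1, 𝓜.mono hvw h.2.1, 𝓜.mono hvw h.2.2⟩
  | eq i j => intro v w _ env h; exact h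
  | bot => intro v w _ env h; exact h
  | and φ ψ ihφ ihψ =>
      intro v w hvw env h; exact ⟨ihφ hvw env h.1, ihψ hvw env h.2⟩
  | or φ ψ ihφ ihψ =>
      intro v w hvw env h
      exact h.elim (fun h => Or.inl (ihφ hvw env h)) (fun h => Or.inr (ihψ hvw env h))
  | imp φ ψ ihφ ihψ =>
      intro v w hvw env h w' hw' hφ; exact h w' (hvw.trans hw') hφ
  | ex φ ih =>
      intro v w hvw env h
      obtain ⟨a, ha, hφ⟩ := h
      exact ⟨a, 𝓜.mono hvw ha, ih hvw (econs a env) hφ⟩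
  | all φ ih =>
      intro v w hvw env h w' hw' a ha; exact h w' (hvw.trans hw') a ha

end


/-! ### Soundness of `Prf` for truth in the universe -/

theorem TSat0_shift (φ : SetF) (a : ZSet) (env : ℕ → ZSet) :
    TSat0 (econs a env) φ.shift ↔ TSat0 env φ := by
  rw [SetF.shift, TSat0_rename]
  exact iff_of_eq (congrArg (fun e => TSat0 e φ) (funext fun n => rfl))

theorem TSat0_instVar (φ : SetF) (k : ℕ) (env : ℕ → ZSet) :
    TSat0 env (φ.instVar k) ↔ TSat0 (econs (env k) env) φ := by
  rw [SetF.instVar, TSat0_rename]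
  refine iff_of_eq (congrArg (fun e => TSat0 e φ) (funext fun n => ?_))
  cases n <;> rfl

theorem Prf_sound {Γ : Set SetF} {φ : SetF} (h : Prf Γ φ) :
    ∀ env : ℕ → ZSet, (∀ γ ∈ Γ, TSat0 env γ) → TSat0 env φ := by
  induction h with
  | hyp hmem => intro env he; exact he _ hmem
  | botE h ih => intro env he; exact absurd (ih env he) not_false
  | andI h1 h2 ih1 ih2 => intro env he; exact ⟨ih1 env he, ih2 env he⟩
  | andE₁ h ih => intro env he; exact (ih env he).1
  | andE₂ h ih => intro env he; exact (ih env he).2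
  | orI₁ h ih => intro env he; exact Or.inl (ih env he)
  | orI₂ h ih => intro env he; exact Or.inr (ih env he)
  | orE h h1 h2 ih ih1 ih2 =>
      intro env he
      rcases ih env he with hl | hr
      · exact ih1 env (fun γ hγ => hγ.elim (fun e => e ▸ hl) (he γ))
      · exact ih2 env (fun γ hγ => hγ.elim (fun e => e ▸ hr) (he γ))
  | impI h ih =>
      intro env he hφ
      exact ih env (fun γ hγ => hγ.elim (fun e => e ▸ hφ) (he γ))
  | impE h1 h2 ih1 ih2 => intro env he; exact ih1 env he (ih2 env he)
  | allI h ih =>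
      intro env he a
      refine ih (econs a env) ?_
      rintro γ ⟨δ, hδ, rfl⟩
      exact (TSat0_shift δ a env).2 (he δ hδ)
  | allE k h ih =>
      intro env he
      exact (TSat0_instVar _ k env).2 (ih env he (env k))
  | exI k h ih =>
      intro env he
      exact ⟨env k, (TSat0_instVar _ k env).1 (ih env he)⟩
  | exE h1 h2 ih1 ih2 =>
      intro env he
      obtain ⟨a, ha⟩ := ih1 env he
      have := ih2 (econs a env) ?_
      · exact (TSat0_shift _ a env).1 this
      · rintro γ (rfl | ⟨δ, hδ, rfl⟩)
        · exact ha
        · exact (TSat0_shift δ a env).2 (he δ hδ)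
  | eqRefl i => intro env he; rfl
  | eqSym h ih => intro env he; exact (ih env he).symm
  | eqTrans h1 h2 ih1 ih2 => intro env he; exact (ih1 env he).trans (ih2 env he)
  | eqMemL h1 h2 ih1 ih2 =>
      intro env he
      have h' := ih1 env he
      have h'' := ih2 env he
      simp only [TSat0] at h' h'' ⊢
      rw [← h']; exact h''
  | eqMemR h1 h2 ih1 ih2 =>
      intro env he
      have h' := ih1 env he
      have h'' := ih2 env he
      simp only [TSat0] at h' h'' ⊢
      rw [← h']; exact h''


section
variable {M : ZSet} (hT : M.IsTransitive) (hZF : ModelsZF M)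

theorem mem_zf_empty : Axioms.emptySet ∈ Axioms.ZFAxioms := by simp [Axioms.ZFAxioms]
theorem mem_zf_pairing : Axioms.pairing ∈ Axioms.ZFAxioms := by simp [Axioms.ZFAxioms]
theorem mem_zf_union : Axioms.unionAx ∈ Axioms.ZFAxioms := by simp [Axioms.ZFAxioms]
theorem mem_zf_power : Axioms.powerSet ∈ Axioms.ZFAxioms := by simp [Axioms.ZFAxioms]
theorem mem_zf_inf : Axioms.zfInfinity ∈ Axioms.ZFAxioms := by simp [Axioms.ZFAxioms]
theorem mem_zf_sep (φ : SetF) : Axioms.sep φ ∈ Axioms.ZFAxioms := by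
  have : Axioms.sep φ ∈ Axioms.SeparationScheme := ⟨φ, rfl⟩
  simp [Axioms.ZFAxioms]; tauto
theorem mem_zf_coll (φ : SetF) : Axioms.coll φ ∈ Axioms.ZFAxioms := by
  have : Axioms.coll φ ∈ Axioms.CollectionScheme := ⟨φ, rfl⟩
  simp [Axioms.ZFAxioms]; tauto

include hT hZF

theorem exists_empty : ∃ e ∈ M, ∀ x : ZSet, x ∉ e := by
  obtain ⟨x0, hx0⟩ := hZF.1
  have h := hZF.2 Axioms.emptySet mem_zf_empty (fun _ => x0) (fun _ => hx0)
  simp only [Axioms.emptySet, CSat, econs] at h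
  obtain ⟨e, heM, he⟩ := h
  exact ⟨e, heM, fun x hx => he x (hT e heM hx) hx⟩

theorem exists_pair {a b : ZSet} (ha : a ∈ M) (hb : b ∈ M) :
    ∃ p ∈ M, ∀ x : ZSet, x ∈ p ↔ (x = a ∨ x = b) := by
  have h := hZF.2 Axioms.pairing mem_zf_pairing (fun _ => a) (fun _ => ha)
  simp only [Axioms.pairing, SetF.biimp, CSat, econs] at h
  obtain ⟨p, hpM, hp⟩ := h a ha b hb
  refine ⟨p, hpM, fun x => ?_⟩
  constructor
  · intro hx; exact (hp x (hT p hpM hx)).1 hx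
  · rintro (rfl | rfl)
    · exact (hp x ha).2 (Or.inl rfl)
    · exact (hp x hb).2 (Or.inr rfl)

theorem exists_union {a : ZSet} (ha : a ∈ M) :
    ∃ u ∈ M, ∀ x : ZSet, x ∈ u ↔ ∃ t, t ∈ a ∧ x ∈ t := by
  have h := hZF.2 Axioms.unionAx mem_zf_union (fun _ => a) (fun _ => ha)
  simp only [Axioms.unionAx, SetF.biimp, CSat, econs] at h
  obtain ⟨u, huM, hu⟩ := h a ha
  refine ⟨u, huM, fun x => ?_⟩
  constructor
  · intro hx
    obtain ⟨t, _, hta, hxt⟩ := (hu x (hT u huM hx)).1 hx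
    exact ⟨t, hta, hxt⟩
  · rintro ⟨t, hta, hxt⟩
    have htM : t ∈ M := hT a ha hta
    have hxM : x ∈ M := hT t htM hxt
    exact (hu x hxM).2 ⟨t, htM, hta, hxt⟩

theorem exists_power {b : ZSet} (hb : b ∈ M) :
    ∃ c ∈ M, ∀ f : ZSet, f ∈ c ↔ (f ∈ M ∧ ∀ x ∈ f, x ∈ b) := by
  have h := hZF.2 Axioms.powerSet mem_zf_power (fun _ => b) (fun _ => hb)
  simp only [Axioms.powerSet, SetF.biimp, CSat, econs] at h
  obtain ⟨c, hcM, hc⟩ := h b hb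
  refine ⟨c, hcM, fun f => ?_⟩
  constructor
  · intro hf
    have hfM : f ∈ M := hT c hcM hf
    exact ⟨hfM, fun x hx => (hc f hfM).1 hf x (hT f hfM hx) hx⟩
  · rintro ⟨hfM, hsub⟩
    exact (hc f hfM).2 (fun x _ hx => hsub x hx)

theorem exists_sep (φ : SetF) {a : ZSet} (ha : a ∈ M) {env : ℕ → ZSet}
    (henv : ∀ n, env n ∈ M) :
    ∃ d ∈ M, ∀ x : ZSet, x ∈ d ↔ (x ∈ a ∧ CSat M (econs x env) φ) := by
  have h := hZF.2 (Axioms.sep φ) (mem_zf_sep φ) env henv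
  simp only [Axioms.sep, SetF.biimp, CSat] at h
  obtain ⟨d, hdM, hd⟩ := h a ha
  have hcomp : ∀ x : ZSet, (econs x (econs d (econs a env))) ∘ (SetF.liftR (· + 2)) =
      econs x env := by
    intro x; funext n
    rcases n with _ | n <;> rfl
  refine ⟨d, hdM, fun x => ?_⟩
  constructor
  · intro hx
    have hxM : x ∈ M := hT d hdM hx
    obtain ⟨h1, h2⟩ := (hd x hxM).1 hx
    rw [CSat_rename, hcomp] at h2
    exact ⟨h1, h2⟩
  · rintro ⟨hxa, hφ⟩
    have hxM : x ∈ M := hT a ha hxa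
    refine (hd x hxM).2 ⟨hxa, ?_⟩
    rw [CSat_rename, hcomp]
    exact hφ

theorem exists_coll (φ : SetF) {a : ZSet} (ha : a ∈ M) {env : ℕ → ZSet}
    (henv : ∀ n, env n ∈ M)
    (H : ∀ x, x ∈ a → ∃ y ∈ M, CSat M (econs x (econs y env)) φ) :
    ∃ b ∈ M, ∀ x, x ∈ a → ∃ y, y ∈ b ∧ CSat M (econs x (econs y env)) φ := by
  have h := hZF.2 (Axioms.coll φ) (mem_zf_coll φ) env henv
  simp only [Axioms.coll, CSat] at h
  have hc1 : ∀ x y : ZSet, (econs y (econs x (econs a env))) ∘ Axioms.collMap₁ =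
      econs x (econs y env) := by
    intro x y; funext n; rcases n with _ | _ | n <;> rfl
  have hprem : ∀ x, x ∈ M → econs x (econs a env) 0 ∈ econs x (econs a env) 1 →
      ∃ y, y ∈ M ∧ CSat M (econs y (econs x (econs a env))) (φ.rename Axioms.collMap₁) := by
    intro x _ hx
    obtain ⟨y, hyM, hy⟩ := H x hx
    refine ⟨y, hyM, ?_⟩
    rw [CSat_rename, hc1]
    exact hy
  obtain ⟨b, hbM, hb⟩ := h a ha hprem
  refine ⟨b, hbM, fun x hxa => ?_⟩
  have hxM : x ∈ M := hT a ha hxa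
  obtain ⟨y, _, hyb, hy⟩ := hb x hxM hxa
  have hc2 : (econs y (econs x (econs b (econs a env)))) ∘ Axioms.collMap₂ =
      econs x (econs y env) := by
    funext n; rcases n with _ | _ | n <;> rfl
  rw [CSat_rename, hc2] at hy
  exact ⟨y, hyb, hy⟩

theorem exists_inductive :
    ∃ I ∈ M, (∃ e, e ∈ I ∧ ∀ x : ZSet, x ∉ e) ∧
      ∀ y, y ∈ I → insert y y ∈ I := by
  obtain ⟨x0, hx0⟩ := hZF.1
  have h := hZF.2 Axioms.zfInfinity mem_zf_inf (fun _ => x0) (fun _ => hx0)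
  simp only [Axioms.zfInfinity, Axioms.isEmptyV, Axioms.isSuccV, CSat, econs] at h
  obtain ⟨I, hIM, ⟨e, heM, heI, hee⟩, hsucc⟩ := h
  refine ⟨I, hIM, ⟨e, heI, fun x hx => hee x (hT e heM hx) hx⟩, fun y hyI => ?_⟩
  have hyM : y ∈ M := hT I hIM hyI
  obtain ⟨s, hsM, hsI, hsub, hmem, hys⟩ := hsucc y hyM hyI
  have : s = insert y y := by
    apply ZFSet.ext
    intro z
    simp only [ZFSet.mem_insert_iff]
    constructor
    · intro hz
      rcases hsub z (hT s hsM hz) hz with h' | h'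
      · exact Or.inr h'
      · exact Or.inl h'
    · rintro (rfl | hz)
      · exact hys
      · exact hmem z (hT y hyM hz) hz
  rwa [this] at hsI

end


section
variable {K : Type} [PartialOrder K] (𝓜 : SoundAssignment K)

theorem forces_ext : 𝓜.ForcesAll Axioms.extensionality := by
  intro v env henv
  intro w1 hw1 a ha w2 hw2 b hb w3 hw3 hbi
  show (a : ZSet) = b
  have haM : a ∈ 𝓜.M w3 := 𝓜.mono (hw2.trans hw3) ha
  have hbM : b ∈ 𝓜.M w3 := 𝓜.mono hw3 hb
  apply ZFSet.ext
  intro z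
  constructor
  · intro hz
    have hzM : z ∈ 𝓜.M w3 := (𝓜.transitive w3) a haM hz
    exact ((hbi w3 le_rfl z hzM).1 w3 le_rfl ⟨hz, hzM, haM⟩).1
  · intro hz
    have hzM : z ∈ 𝓜.M w3 := (𝓜.transitive w3) b hbM hz
    exact ((hbi w3 le_rfl z hzM).2 w3 le_rfl ⟨hz, hzM, hbM⟩).1

theorem forces_empty : 𝓜.ForcesAll Axioms.emptySet := by
  intro v env henv
  obtain ⟨e, heM, he⟩ := exists_empty (𝓜.transitive v) (𝓜.modelsZF v)
  refine ⟨e, heM, ?_⟩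
  intro w hw x hx w' hw' hmem
  exact he x hmem.1

theorem forces_pairing : 𝓜.ForcesAll Axioms.pairing := by
  intro v env henv
  intro w1 hw1 a ha w2 hw2 b hb
  have haM : a ∈ 𝓜.M w2 := 𝓜.mono hw2 ha
  obtain ⟨p, hpM, hp⟩ := exists_pair (𝓜.transitive w2) (𝓜.modelsZF w2) haM hb
  refine ⟨p, hpM, ?_⟩
  intro w3 hw3 x hx
  constructor
  · intro w4 hw4 hmem
    rcases (hp x).1 hmem.1 with rfl | rfl
    · exact Or.inl rfl
    · exact Or.inr rfl
  · intro w4 hw4 hor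
    have hxM : x ∈ 𝓜.M w4 := 𝓜.mono hw4 hx
    have hpM4 : p ∈ 𝓜.M w4 := 𝓜.mono (hw3.trans hw4) hpM
    rcases hor with h | h
    · exact ⟨(hp x).2 (Or.inl h), hxM, hpM4⟩
    · exact ⟨(hp x).2 (Or.inr h), hxM, hpM4⟩

theorem forces_union : 𝓜.ForcesAll Axioms.unionAx := by
  intro v env henv
  intro w1 hw1 a ha
  obtain ⟨u, huM, hu⟩ := exists_union (𝓜.transitive w1) (𝓜.modelsZF w1) ha
  refine ⟨u, huM, ?_⟩
  intro w2 hw2 x hx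
  constructor
  · intro w3 hw3 hmem
    obtain ⟨t, hta, hxt⟩ := (hu x).1 hmem.1
    have htM : t ∈ 𝓜.M w3 :=
      𝓜.mono (hw2.trans hw3) ((𝓜.transitive w1) a ha hta)
    have haM3 : a ∈ 𝓜.M w3 := 𝓜.mono (hw2.trans hw3) ha
    exact ⟨t, htM, ⟨hta, htM, haM3⟩, ⟨hxt, hmem.2.1, htM⟩⟩
  · intro w3 hw3 hex
    obtain ⟨t, htM, hta, hxt⟩ := hex
    have hxu : x ∈ u := (hu x).2 ⟨t, hta.1, hxt.1⟩
    exact ⟨hxu, 𝓜.mono hw3 hx, 𝓜.mono (hw2.trans hw3) huM⟩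

theorem forces_setInd (φ : SetF) : 𝓜.ForcesAll (Axioms.setInd φ) := by
  intro v env henv
  intro w hw hprog
  have hc : ∀ x a : ZSet, (econs x (econs a env)) ∘ (SetF.liftR Nat.succ) = econs x env := by
    intro x a; funext n; rcases n with _ | n <;> rfl
  have main : ∀ a : ZSet, ∀ w1, w ≤ w1 → a ∈ 𝓜.M w1 →
      𝓜.Forces w1 (econs a env) φ := by
    intro a
    induction a using ZFSet.inductionOn with
    | _ a IH =>
      intro w1 hw1 ha
      refine hprog w1 hw1 a ha w1 le_rfl ?_
      intro w2 hw2 x hxM w3 hw3 hmem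
      have : SForces (fun v => {x : ZSet | x ∈ 𝓜.M v})
          (fun v a b => a ∈ b ∧ a ∈ 𝓜.M v ∧ b ∈ 𝓜.M v) w3
          ((econs x (econs a env)) ∘ (SetF.liftR Nat.succ)) φ := by
        rw [hc]
        exact IH x hmem.1 w3 (hw1.trans (hw2.trans hw3)) hmem.2.1
      exact (SForces_rename _ _ φ _ w3 _).2 this
  intro w1 hw1 a ha
  exact main a w1 hw1 ha

theorem forces_sep {φ : SetF} (hΔ : Delta0 φ) : 𝓜.ForcesAll (Axioms.sep φ) := by
  intro v env henv
  intro w hw a ha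
  have henvw : ∀ n, env n ∈ 𝓜.M w := fun n => 𝓜.mono hw (henv n)
  obtain ⟨d, hdM, hd⟩ := exists_sep (𝓜.transitive w) (𝓜.modelsZF w) φ ha henvw
  refine ⟨d, hdM, ?_⟩
  intro w1 hw1 x hx
  have hcomp : (econs x (econs d (econs a env))) ∘ (SetF.liftR (· + 2)) = econs x env := by
    funext n; rcases n with _ | n <;> rfl
  constructor
  · intro w2 hw2 hmem
    have hxd := hmem.1
    have hxMw : x ∈ 𝓜.M w := (𝓜.transitive w) d hdM hxd
    obtain ⟨hxa, hφ⟩ := (hd x).1 hxd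
    have ht : TSat0 (econs x env) φ :=
      (CSat_delta0 (𝓜.transitive w) hΔ _ (econs_mem hxMw henvw)).1 hφ
    have henvw2 : ∀ n, env n ∈ 𝓜.M w2 := fun n =>
      𝓜.mono (hw1.trans hw2) (henvw n)
    refine ⟨⟨hxa, hmem.2.1, 𝓜.mono ((hw1.trans hw2)) ha⟩, ?_⟩
    have : 𝓜.Forces w2 (econs x env) φ :=
      (Forces_delta0 𝓜 hΔ w2 (econs x env) (econs_mem hmem.2.1 henvw2)).2 ht
    exact (SForces_rename _ _ φ _ w2 _).2 (by rw [hcomp]; exact this)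
  · intro w2 hw2 hand
    obtain ⟨hmem2, hφF⟩ := hand
    have hxMw : x ∈ 𝓜.M w := (𝓜.transitive w) a ha hmem2.1
    have henvw2 : ∀ n, env n ∈ 𝓜.M w2 := fun n =>
      𝓜.mono (hw1.trans hw2) (henvw n)
    have hφF' := (SForces_rename _ _ φ _ w2 _).1 hφF
    rw [hcomp] at hφF'
    have ht : TSat0 (econs x env) φ :=
      (Forces_delta0 𝓜 hΔ w2 (econs x env) (econs_mem hmem2.2.1 henvw2)).1 hφF'
    have hxd : x ∈ d := (hd x).2 ⟨hmem2.1,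
      (CSat_delta0 (𝓜.transitive w) hΔ _ (econs_mem hxMw henvw)).2 ht⟩
    exact ⟨hxd, hmem2.2.1, 𝓜.mono (hw1.trans hw2) hdM⟩

theorem forces_coll {φ : SetF} (hΔ : Delta0 φ) : 𝓜.ForcesAll (Axioms.coll φ) := by
  intro v env henv
  intro w hw a ha w1 hw1 hhyp
  have haM1 : a ∈ 𝓜.M w1 := 𝓜.mono hw1 ha
  have henv1 : ∀ n, env n ∈ 𝓜.M w1 := fun n => 𝓜.mono (hw.trans hw1) (henv n)
  have hT1 := 𝓜.transitive w1
  have hc1 : ∀ x y : ZSet, (econs y (econs x (econs a env))) ∘ Axioms.collMap₁ =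
      econs x (econs y env) := by
    intro x y; funext n; rcases n with _ | _ | n <;> rfl
  have H : ∀ x, x ∈ a → ∃ y ∈ 𝓜.M w1, CSat (𝓜.M w1) (econs x (econs y env)) φ := by
    intro x hxa
    have hxM1 : x ∈ 𝓜.M w1 := hT1 a haM1 hxa
    obtain ⟨y, hyM, hF⟩ := hhyp w1 le_rfl x hxM1 w1 le_rfl ⟨hxa, hxM1, haM1⟩
    have hF' := (SForces_rename _ _ φ _ w1 _).1 hF
    rw [hc1] at hF'
    have ht : TSat0 (econs x (econs y env)) φ :=
      (Forces_delta0 𝓜 hΔ w1 _ (econs_mem hxM1 (econs_mem hyM henv1))).1 hF'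
    exact ⟨y, hyM, (CSat_delta0 hT1 hΔ _ (econs_mem hxM1 (econs_mem hyM henv1))).2 ht⟩
  obtain ⟨b, hbM, hb⟩ := exists_coll hT1 (𝓜.modelsZF w1) φ haM1 henv1 H
  refine ⟨b, hbM, ?_⟩
  intro w2 hw2 x hx w3 hw3 hmem
  obtain ⟨y, hyb, hy⟩ := hb x hmem.1
  have hyM1 : y ∈ 𝓜.M w1 := hT1 b hbM hyb
  have hxM1 : x ∈ 𝓜.M w1 := hT1 a haM1 hmem.1
  have ht : TSat0 (econs x (econs y env)) φ :=
    (CSat_delta0 hT1 hΔ _ (econs_mem hxM1 (econs_mem hyM1 henv1))).1 hy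
  have hyM3 : y ∈ 𝓜.M w3 := 𝓜.mono (hw2.trans hw3) hyM1
  have hbM3 : b ∈ 𝓜.M w3 := 𝓜.mono (hw2.trans hw3) hbM
  have henv3 : ∀ n, env n ∈ 𝓜.M w3 := fun n => 𝓜.mono (hw2.trans hw3) (henv1 n)
  have hc2 : (econs y (econs x (econs b (econs a env)))) ∘ Axioms.collMap₂ =
      econs x (econs y env) := by
    funext n; rcases n with _ | _ | n <;> rfl
  refine ⟨y, hyM3, ⟨hyb, hyM3, hbM3⟩, ?_⟩
  refine (SForces_rename _ _ φ _ w3 _).2 ?_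
  rw [hc2]
  exact (Forces_delta0 𝓜 hΔ w3 _ (econs_mem hmem.2.1 (econs_mem hyM3 henv3))).2 ht

theorem forces_strongColl {φ : SetF} (hΔ : Delta0 φ) :
    𝓜.ForcesAll (Axioms.strongColl φ) := by
  intro v env henv
  intro w hw a ha w1 hw1 hhyp
  have haM1 : a ∈ 𝓜.M w1 := 𝓜.mono hw1 ha
  have henv1 : ∀ n, env n ∈ 𝓜.M w1 := fun n => 𝓜.mono (hw.trans hw1) (henv n)
  have hT1 := 𝓜.transitive w1
  have hZF1 := 𝓜.modelsZF w1
  have hc1 : ∀ x y : ZSet, (econs y (econs x (econs a env))) ∘ Axioms.collMap₁ =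
      econs x (econs y env) := by
    intro x y; funext n; rcases n with _ | _ | n <;> rfl
  have H : ∀ x, x ∈ a → ∃ y ∈ 𝓜.M w1, CSat (𝓜.M w1) (econs x (econs y env)) φ := by
    intro x hxa
    have hxM1 : x ∈ 𝓜.M w1 := hT1 a haM1 hxa
    obtain ⟨y, hyM, hF⟩ := hhyp w1 le_rfl x hxM1 w1 le_rfl ⟨hxa, hxM1, haM1⟩
    have hF' := (SForces_rename _ _ φ _ w1 _).1 hF
    rw [hc1] at hF'
    have ht : TSat0 (econs x (econs y env)) φ :=
      (Forces_delta0 𝓜 hΔ w1 _ (econs_mem hxM1 (econs_mem hyM henv1))).1 hF'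
    exact ⟨y, hyM, (CSat_delta0 hT1 hΔ _ (econs_mem hxM1 (econs_mem hyM henv1))).2 ht⟩
  obtain ⟨b, hbM, hb⟩ := exists_coll hT1 hZF1 φ haM1 henv1 H
  -- refine b to b' = {y ∈ b : ∃ x ∈ a, φ(x,y)}
  set g : ℕ → ℕ := fun n => match n with | 0 => 0 | 1 => 1 | n + 2 => n + 3 with hg
  set χ : SetF := .ex (.and (.mem 0 2) (φ.rename g)) with hχ
  obtain ⟨b', hb'M, hb'⟩ := exists_sep hT1 hZF1 χ hbM (econs_mem haM1 henv1)
  have hgc : ∀ x y : ZSet, (econs x (econs y (econs a env))) ∘ g =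
      econs x (econs y env) := by
    intro x y; funext n; rcases n with _ | _ | n <;> rfl
  -- characterize b'
  have hb'char : ∀ y : ZSet, y ∈ b' ↔ (y ∈ b ∧ ∃ x, x ∈ 𝓜.M w1 ∧ x ∈ a ∧
      TSat0 (econs x (econs y env)) φ) := by
    intro y
    rw [hb' y]
    refine and_congr_right fun hyb => ?_
    have hyM1 : y ∈ 𝓜.M w1 := hT1 b hbM hyb
    constructor
    · rintro ⟨x, hxM, hxa, hρ⟩
      rw [CSat_rename, hgc] at hρ
      exact ⟨x, hxM, hxa, (CSat_delta0 hT1 hΔ _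
        (econs_mem hxM (econs_mem hyM1 henv1))).1 hρ⟩
    · rintro ⟨x, hxM, hxa, ht⟩
      refine ⟨x, hxM, hxa, ?_⟩
      rw [CSat_rename, hgc]
      exact (CSat_delta0 hT1 hΔ _ (econs_mem hxM (econs_mem hyM1 henv1))).2 ht
  refine ⟨b', hb'M, ?_, ?_⟩
  · -- ∀ x ∈ a ∃ y ∈ b', φ
    intro w2 hw2 x hx w3 hw3 hmem
    obtain ⟨y, hyb, hy⟩ := hb x hmem.1
    have hyM1 : y ∈ 𝓜.M w1 := hT1 b hbM hyb
    have hxM1 : x ∈ 𝓜.M w1 := hT1 a haM1 hmem.1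
    have ht : TSat0 (econs x (econs y env)) φ :=
      (CSat_delta0 hT1 hΔ _ (econs_mem hxM1 (econs_mem hyM1 henv1))).1 hy
    have hyb' : y ∈ b' := (hb'char y).2 ⟨hyb, x, hxM1, hmem.1, ht⟩
    have hyM3 : y ∈ 𝓜.M w3 := 𝓜.mono (hw2.trans hw3) hyM1
    have hb'M3 : b' ∈ 𝓜.M w3 := 𝓜.mono (hw2.trans hw3) hb'M
    have henv3 : ∀ n, env n ∈ 𝓜.M w3 := fun n => 𝓜.mono (hw2.trans hw3) (henv1 n)
    have hc2 : (econs y (econs x (econs b' (econs a env)))) ∘ Axioms.collMap₂ =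
        econs x (econs y env) := by
      funext n; rcases n with _ | _ | n <;> rfl
    refine ⟨y, hyM3, ⟨hyb', hyM3, hb'M3⟩, ?_⟩
    refine (SForces_rename _ _ φ _ w3 _).2 ?_
    rw [hc2]
    exact (Forces_delta0 𝓜 hΔ w3 _ (econs_mem hmem.2.1 (econs_mem hyM3 henv3))).2 ht
  · -- ∀ y ∈ b' ∃ x ∈ a, φ
    intro w2 hw2 y hy w3 hw3 hmem
    obtain ⟨hyb, x, hxM1, hxa, ht⟩ := (hb'char y).1 hmem.1
    have hyM1 : y ∈ 𝓜.M w1 := hT1 b hbM hyb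
    have hxM3 : x ∈ 𝓜.M w3 := 𝓜.mono (hw2.trans hw3) hxM1
    have haM3 : a ∈ 𝓜.M w3 := 𝓜.mono (hw2.trans hw3) haM1
    have hyM3 : y ∈ 𝓜.M w3 := 𝓜.mono (hw2.trans hw3) hyM1
    have henv3 : ∀ n, env n ∈ 𝓜.M w3 := fun n => 𝓜.mono (hw2.trans hw3) (henv1 n)
    have hc3 : (econs x (econs y (econs b' (econs a env)))) ∘ Axioms.collMap₃ =
        econs x (econs y env) := by
      funext n; rcases n with _ | _ | n <;> rfl
    refine ⟨x, hxM3, ⟨hxa, hxM3, haM3⟩, ?_⟩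
    refine (SForces_rename _ _ φ _ w3 _).2 ?_
    rw [hc3]
    exact (Forces_delta0 𝓜 hΔ w3 _ (econs_mem hxM3 (econs_mem hyM3 henv3))).2 ht

theorem delta0_isEmptyV (i : ℕ) : Delta0 (Axioms.isEmptyV i) := Delta0.ball i Delta0.bot

theorem delta0_isSuccV (i j : ℕ) : Delta0 (Axioms.isSuccV i j) :=
  Delta0.and (Delta0.ball i (Delta0.or (Delta0.mem _ _) (Delta0.eq _ _)))
    (Delta0.and (Delta0.ball j (Delta0.mem _ _)) (Delta0.mem _ _))

/-- The Δ₀ formula `x₀ = ∅ ∨ ∃z∈x₀, x₀ = z ∪ {z}`. -/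
def natStep : SetF :=
  .or (Axioms.isEmptyV 0) (.ex (.and (.mem 0 1) (Axioms.isSuccV 1 0)))

theorem delta0_natStep : Delta0 natStep :=
  Delta0.or (delta0_isEmptyV 0) (Delta0.bex 0 (delta0_isSuccV 1 0))

theorem TSat0_natStep (x : ZSet) (e' : ℕ → ZSet) :
    TSat0 (econs x e') natStep ↔
      ((∀ u : ZSet, u ∈ x → False) ∨
        ∃ z : ZSet, z ∈ x ∧ ((∀ u : ZSet, u ∈ x → (u ∈ z ∨ u = z)) ∧
          (∀ u : ZSet, u ∈ z → u ∈ x) ∧ z ∈ x)) := Iff.rfl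

theorem forces_inf : 𝓜.ForcesAll Axioms.infinityIKP := by
  intro v env henv
  have hTv := 𝓜.transitive v
  have hZFv := 𝓜.modelsZF v
  obtain ⟨I, hIM, ⟨e, heI, he⟩, hind⟩ := exists_inductive hTv hZFv
  obtain ⟨N, hNM, hN⟩ := exists_sep hTv hZFv natStep hIM henv
  have hNchar : ∀ x : ZSet, x ∈ N ↔ (x ∈ I ∧ TSat0 (econs x env) natStep) := by
    intro x
    rw [hN x]
    refine and_congr_right fun hxI => ?_
    have hxM : x ∈ 𝓜.M v := hTv I hIM hxI
    exact CSat_delta0 hTv delta0_natStep _ (econs_mem hxM henv)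
  have hbody : Delta0 (SetF.and (.ex (.and (.mem 0 1) (Axioms.isEmptyV 0)))
      (.and (.all (.imp (.mem 0 1) (.ex (.and (.mem 0 2) (Axioms.isSuccV 0 1)))))
        (.all (.imp (.mem 0 1) natStep)))) :=
    Delta0.and (Delta0.bex 0 (delta0_isEmptyV 0))
      (Delta0.and (Delta0.ball 0 (Delta0.bex 1 (delta0_isSuccV 0 1)))
        (Delta0.ball 0 delta0_natStep))
  refine ⟨N, hNM, ?_⟩
  show 𝓜.Forces v (econs N env) _
  refine (Forces_delta0 𝓜 hbody v _ (econs_mem hNM henv)).2 ?_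
  refine ⟨⟨e, ?_, he⟩, ?_, ?_⟩
  · -- e ∈ N
    exact (hNchar e).2 ⟨heI, (TSat0_natStep e env).2 (Or.inl he)⟩
  · -- successor closure
    intro y hyN
    obtain ⟨hyI, _⟩ := (hNchar y).1 hyN
    have hsI : insert y y ∈ I := hind y hyI
    have hys : y ∈ insert y y := ZFSet.mem_insert_iff.2 (Or.inl rfl)
    refine ⟨insert y y, ?_, ?_, ?_, hys⟩
    · -- insert y y ∈ N
      refine (hNchar _).2 ⟨hsI, (TSat0_natStep _ env).2 (Or.inr ⟨y, hys, ?_, ?_, hys⟩)⟩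
      · intro u hu
        rcases ZFSet.mem_insert_iff.1 hu with h | h
        · exact Or.inr h
        · exact Or.inl h
      · intro u hu
        exact ZFSet.mem_insert_iff.2 (Or.inr hu)
    · -- s = y ∪ {y} conditions  (isSuccV 0 1 in context [s, y, N, env])
      intro u hu
      rcases ZFSet.mem_insert_iff.1 hu with h | h
      · exact Or.inr h
      · exact Or.inl h
    · intro u hu
      exact ZFSet.mem_insert_iff.2 (Or.inr hu)
  · -- every element is zero or a successor
    intro y hyN
    exact ((hNchar y).1 hyN).2

theorem forces_subsetColl {ψ : SetF} (hΔ : Delta0 ψ) (t : ℕ)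
    (hPrf : Prf ∅ (.imp ψ (.mem 2 t))) : 𝓜.ForcesAll (Axioms.subsetColl ψ) := by
  intro v env henv
  intro w1 hw1 a ha w2 hw2 b hbM2
  have hT2 := 𝓜.transitive w2
  have hZF2 := 𝓜.modelsZF w2
  have haM2 : a ∈ 𝓜.M w2 := 𝓜.mono hw2 ha
  have henv2 : ∀ n, env n ∈ 𝓜.M w2 := fun n => 𝓜.mono (hw1.trans hw2) (henv n)
  obtain ⟨c, hcM, hc⟩ := exists_power hT2 hZF2 hbM2
  refine ⟨c, hcM, ?_⟩
  intro w3 hw3 u huM3 w4 hw4 hH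
  have haM4 : a ∈ 𝓜.M w4 := 𝓜.mono (hw3.trans hw4) haM2
  have hbM4 : b ∈ 𝓜.M w4 := 𝓜.mono (hw3.trans hw4) hbM2
  have hcM4 : c ∈ 𝓜.M w4 := 𝓜.mono (hw3.trans hw4) hcM
  have huM4 : u ∈ 𝓜.M w4 := 𝓜.mono hw4 huM3
  have henv4 : ∀ n, env n ∈ 𝓜.M w4 := fun n => 𝓜.mono (hw3.trans hw4) (henv2 n)
  have hssc1 : ∀ x y : ZSet,
      (econs y (econs x (econs u (econs c (econs b (econs a env)))))) ∘ Axioms.sscMap₁ =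
        econs x (econs y (econs u env)) := by
    intro x y; funext n; rcases n with _ | _ | _ | n <;> rfl
  have Hsem : ∀ x, x ∈ a → ∃ y, y ∈ b ∧
      TSat0 (econs x (econs y (econs u env))) ψ := by
    intro x hxa
    have hxM4 : x ∈ 𝓜.M w4 := (𝓜.transitive w4) a haM4 hxa
    obtain ⟨y, hyM4, hyb, hψ⟩ := hH w4 le_rfl x hxM4 w4 le_rfl ⟨hxa, hxM4, haM4⟩
    have hψ' := (SForces_rename _ _ ψ _ w4 _).1 hψ
    rw [hssc1] at hψ'
    exact ⟨y, hyb.1, (Forces_delta0 𝓜 hΔ w4 _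
      (econs_mem hxM4 (econs_mem hyM4 (econs_mem huM4 henv4)))).1 hψ'⟩
  by_cases hne : ∃ x, x ∈ a
  · -- nonempty case : u is set-bounded, so u ∈ 𝓜.M w2
    obtain ⟨x0, hx0⟩ := hne
    obtain ⟨y0, hy0b, hψ0⟩ := Hsem x0 hx0
    have hx0M1 : x0 ∈ 𝓜.M w1 := (𝓜.transitive w1) a ha hx0
    have hy0M2 : y0 ∈ 𝓜.M w2 := hT2 b hbM2 hy0b
    have hut : u ∈ (econs x0 (econs y0 (econs u env))) t :=
      Prf_sound hPrf _ (fun γ hγ => absurd hγ (Set.notMem_empty γ)) hψ0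
    have huM2 : u ∈ 𝓜.M w2 := by
      rcases t with _ | _ | _ | t
      · exact 𝓜.mono hw2 ((𝓜.transitive w1) x0 hx0M1 hut)
      · exact hT2 y0 hy0M2 hut
      · exact absurd hut (ZFSet.mem_irrefl u)
      · exact 𝓜.mono (hw1.trans hw2) ((𝓜.transitive v) (env t) (henv t) hut)
    -- separate d = {y ∈ b : ∃ x ∈ a, ψ(x, y, u)}
    set g : ℕ → ℕ := fun n => match n with | 0 => 0 | 1 => 1 | 2 => 3 | n + 3 => n + 4
      with hg
    set χ : SetF := .ex (.and (.mem 0 2) (ψ.rename g)) with hχ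
    obtain ⟨d, hdM, hd⟩ := exists_sep hT2 hZF2 χ hbM2
      (econs_mem haM2 (econs_mem huM2 henv2))
    have hgc : ∀ x y : ZSet,
        (econs x (econs y (econs a (econs u env)))) ∘ g =
          econs x (econs y (econs u env)) := by
      intro x y; funext n; rcases n with _ | _ | _ | n <;> rfl
    have hdchar : ∀ y : ZSet, y ∈ d ↔ (y ∈ b ∧ ∃ x, x ∈ 𝓜.M w2 ∧ x ∈ a ∧
        TSat0 (econs x (econs y (econs u env))) ψ) := by
      intro y
      rw [hd y]
      refine and_congr_right fun hyb => ?_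
      have hyM2 : y ∈ 𝓜.M w2 := hT2 b hbM2 hyb
      constructor
      · rintro ⟨x, hxM, hxa, hρ⟩
        rw [CSat_rename, hgc] at hρ
        exact ⟨x, hxM, hxa, (CSat_delta0 hT2 hΔ _
          (econs_mem hxM (econs_mem hyM2 (econs_mem huM2 henv2)))).1 hρ⟩
      · rintro ⟨x, hxM, hxa, ht⟩
        refine ⟨x, hxM, hxa, ?_⟩
        rw [CSat_rename, hgc]
        exact (CSat_delta0 hT2 hΔ _
          (econs_mem hxM (econs_mem hyM2 (econs_mem huM2 henv2)))).2 ht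
    have hdc : d ∈ c := (hc d).2 ⟨hdM, fun y hy => ((hdchar y).1 hy).1⟩
    have hdM4 : d ∈ 𝓜.M w4 := 𝓜.mono (hw3.trans hw4) hdM
    refine ⟨d, hdM4, ⟨hdc, hdM4, hcM4⟩, ?_, ?_⟩
    · -- ∀ x ∈ a ∃ y ∈ d, ψ
      intro w5 hw5 x hx w6 hw6 hmem
      obtain ⟨y, hyb, hψ⟩ := Hsem x hmem.1
      have hxM2 : x ∈ 𝓜.M w2 := 𝓜.mono hw2 ((𝓜.transitive w1) a ha hmem.1)
      have hyd : y ∈ d := (hdchar y).2 ⟨hyb, x, hxM2, hmem.1, hψ⟩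
      have hyM2 : y ∈ 𝓜.M w2 := hT2 b hbM2 hyb
      have h26 : 𝓜.M w2 ⊆ 𝓜.M w6 :=
        𝓜.mono (((hw3.trans hw4).trans hw5).trans hw6)
      have hyM6 : y ∈ 𝓜.M w6 := h26 hyM2
      have hssc2 : (econs y (econs x (econs d (econs u (econs c
          (econs b (econs a env))))))) ∘ Axioms.sscMap₂ =
            econs x (econs y (econs u env)) := by
        funext n; rcases n with _ | _ | _ | n <;> rfl
      refine ⟨y, hyM6, ⟨hyd, hyM6, h26 hdM⟩, ?_⟩
      refine (SForces_rename _ _ ψ _ w6 _).2 ?_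
      rw [hssc2]
      exact (Forces_delta0 𝓜 hΔ w6 _
        (econs_mem hmem.2.1 (econs_mem hyM6 (econs_mem (h26 huM2)
          (fun n => h26 (henv2 n)))))).2 hψ
    · -- ∀ y ∈ d ∃ x ∈ a, ψ
      intro w5 hw5 y hy w6 hw6 hmem
      obtain ⟨hyb, x, hxM2, hxa, hψ⟩ := (hdchar y).1 hmem.1
      have hyM2 : y ∈ 𝓜.M w2 := hT2 b hbM2 hyb
      have h26 : 𝓜.M w2 ⊆ 𝓜.M w6 :=
        𝓜.mono (((hw3.trans hw4).trans hw5).trans hw6)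
      have hxM6 : x ∈ 𝓜.M w6 := h26 hxM2
      have hssc3 : (econs x (econs y (econs d (econs u (econs c
          (econs b (econs a env))))))) ∘ Axioms.sscMap₃ =
            econs x (econs y (econs u env)) := by
        funext n; rcases n with _ | _ | _ | n <;> rfl
      refine ⟨x, hxM6, ⟨hxa, hxM6, h26 haM2⟩, ?_⟩
      refine (SForces_rename _ _ ψ _ w6 _).2 ?_
      rw [hssc3]
      exact (Forces_delta0 𝓜 hΔ w6 _
        (econs_mem hxM6 (econs_mem (h26 hyM2) (econs_mem (h26 huM2)
          (fun n => h26 (henv2 n)))))).2 hψ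
  · -- a has no elements : take d empty
    obtain ⟨d, hdM, hd⟩ := exists_empty hT2 hZF2
    have hdc : d ∈ c := (hc d).2 ⟨hdM, fun y hy => absurd hy (hd y)⟩
    have hdM4 : d ∈ 𝓜.M w4 := 𝓜.mono (hw3.trans hw4) hdM
    refine ⟨d, hdM4, ⟨hdc, hdM4, hcM4⟩, ?_, ?_⟩
    · intro w5 hw5 x hx w6 hw6 hmem
      exact absurd ⟨x, hmem.1⟩ hne
    · intro w5 hw5 y hy w6 hw6 hmem
      exact absurd hmem.1 (hd y)

end

/-- Every Kripke model with classical domains forces all axioms of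
intuitionistic Kripke–Platek set theory `IKP⁺`. -/
theorem classical_domains_model_IKPplus {K : Type} [PartialOrder K]
    (𝓜 : SoundAssignment K) :
    ∀ φ ∈ Axioms.IKPplus, 𝓜.ForcesAll φ := by
  intro φ hφ
  rcases hφ with (hφ | hφ) | hφ
  · rcases hφ with ((hφ | hφ) | hφ) | hφ
    · simp only [Set.mem_insert_iff, Set.mem_singleton_iff] at hφ
      rcases hφ with rfl | rfl | rfl | rfl | rfl
      · exact forces_ext 𝓜
      · exact forces_empty 𝓜
      · exact forces_pairing 𝓜
      · exact forces_union 𝓜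
      · exact forces_inf 𝓜
    · obtain ⟨ψ, rfl⟩ := hφ
      exact forces_setInd 𝓜 ψ
    · obtain ⟨ψ, hΔ, rfl⟩ := hφ
      exact forces_sep 𝓜 hΔ
    · obtain ⟨ψ, hΔ, rfl⟩ := hφ
      exact forces_coll 𝓜 hΔ
  · obtain ⟨ψ, hΔ, rfl⟩ := hφ
    exact forces_strongColl 𝓜 hΔ
  · obtain ⟨ψ, t, hΔ, hfree, hPrf, rfl⟩ := hφ
    exact forces_subsetColl 𝓜 hΔ t hPrf

end IKP2007
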